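/- arXiv:1912.04551 — 4 statements merged into one kernel-verified Lean document; each statement's English description precedes it below -/
import Mathlib

section
/- Let X = (Ω,C) be a homogeneous symmetric rainbow of rank at most 4 (the diagonal 1_Ω is a class and every class equals its transpose). Then X is a Jordan configuration (for all classes C, D ∈ C the quantity |C(α)∩D^T(β)| + |D(α)∩C^T(β)| depends only on the class containing (α,β)) if and only if X is a coherent configuration (for all classes C, D the quantity |C(α)∩D^T(β)| depends only on the class containing (α,β)); in that case X is a commutative association scheme. -/
open Matrix

noncomputable section

namespace JordanPaper

open scoped Classical

variable {Ω : Type*}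

/-- The adjacency matrix (over `F`) of a binary relation on `Ω`. -/
def adj (F : Type*) [Zero F] [One F] (c : Set (Ω × Ω)) : Matrix Ω Ω F :=
  Matrix.of fun a b => if (a, b) ∈ c then 1 else 0

/-- The all-ones matrix. -/
def allOnes (F : Type*) [One F] : Matrix Ω Ω F :=
  Matrix.of fun _ _ => 1

/-- The diagonal relation `1_Δ` on a subset `Δ ⊆ Ω`. -/
def diagRel (Δ : Set Ω) : Set (Ω × Ω) := {p | p.1 = p.2 ∧ p.1 ∈ Δ}

/-- The transposed relation. -/
def transposeRel (c : Set (Ω × Ω)) : Set (Ω × Ω) := {p | (p.2, p.1) ∈ c}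

/-- `outSet c α = c(α) = {β | (α,β) ∈ c}`. -/
def outSet (c : Set (Ω × Ω)) (α : Ω) : Set Ω := {β | (α, β) ∈ c}

/-- A partition of `Ω × Ω` into nonempty pairwise disjoint classes. -/
def IsPartition (P : Set (Set (Ω × Ω))) : Prop :=
  (∀ c ∈ P, c.Nonempty) ∧ (∀ c ∈ P, ∀ d ∈ P, c ≠ d → c ∩ d = ∅) ∧ ⋃₀ P = Set.univ

/-- A partition of `Δ × Δ` into nonempty pairwise disjoint classes. -/
def IsPartitionOn (Δ : Set Ω) (P : Set (Set (Ω × Ω))) : Prop :=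
  (∀ c ∈ P, c.Nonempty) ∧ (∀ c ∈ P, ∀ d ∈ P, c ≠ d → c ∩ d = ∅) ∧ ⋃₀ P = Δ ×ˢ Δ

/-- A rainbow: a partition of `Ω × Ω` such that the diagonal is a union of classes
and the set of classes is closed under transposition. -/
def IsRainbow (P : Set (Set (Ω × Ω))) : Prop :=
  IsPartition P ∧
  (∀ c ∈ P, (c ∩ diagRel (Set.univ : Set Ω)).Nonempty → c ⊆ diagRel (Set.univ : Set Ω)) ∧
  (∀ c ∈ P, transposeRel c ∈ P)

/-- `|c(α) ∩ dᵀ(β)|`. -/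
def cnum (c d : Set (Ω × Ω)) (α β : Ω) : ℕ :=
  (outSet c α ∩ outSet (transposeRel d) β).ncard

/-- `|c(α) ∩ dᵀ(β)| + |d(α) ∩ cᵀ(β)|`. -/
def jnum (c d : Set (Ω × Ω)) (α β : Ω) : ℕ :=
  cnum c d α β + cnum d c α β

/-- The coherence (intersection-number) condition. -/
def IsCoherentCond (P : Set (Set (Ω × Ω))) : Prop :=
  ∀ c ∈ P, ∀ d ∈ P, ∀ f ∈ P, ∀ p ∈ f, ∀ q ∈ f,
    cnum c d (p : Ω × Ω).1 (p : Ω × Ω).2 = cnum c d (q : Ω × Ω).1 (q : Ω × Ω).2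

/-- The Jordan (symmetrized intersection-number) condition. -/
def IsJordanCond (P : Set (Set (Ω × Ω))) : Prop :=
  ∀ c ∈ P, ∀ d ∈ P, ∀ f ∈ P, ∀ p ∈ f, ∀ q ∈ f,
    jnum c d (p : Ω × Ω).1 (p : Ω × Ω).2 = jnum c d (q : Ω × Ω).1 (q : Ω × Ω).2

/-- A coherent configuration. -/
def IsCoherentConfig (P : Set (Set (Ω × Ω))) : Prop := IsRainbow P ∧ IsCoherentCond P

/-- A Jordan configuration. -/
def IsJordanConfig (P : Set (Set (Ω × Ω))) : Prop := IsRainbow P ∧ IsJordanCond P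

/-- An association scheme on a subset `Δ` (homogeneous coherent configuration on `Δ`). -/
def IsAssocSchemeOn (Δ : Set Ω) (P : Set (Set (Ω × Ω))) : Prop :=
  IsPartitionOn Δ P ∧ diagRel Δ ∈ P ∧ (∀ c ∈ P, transposeRel c ∈ P) ∧ IsCoherentCond P

/-- The Jordan product of matrices. -/
def jmul (F : Type*) [Field F] [Fintype Ω] (x y : Matrix Ω Ω F) : Matrix Ω Ω F :=
  (2 : F)⁻¹ • (x * y + y * x)

/-- A coherent algebra. -/
def IsCoherentAlgebra (F : Type*) [Field F] [Fintype Ω] [DecidableEq Ω]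
    (A : Submodule F (Matrix Ω Ω F)) : Prop :=
  (1 : Matrix Ω Ω F) ∈ A ∧ allOnes F ∈ A ∧ (∀ x ∈ A, xᵀ ∈ A) ∧
  (∀ x ∈ A, ∀ y ∈ A, x * y ∈ A) ∧ (∀ x ∈ A, ∀ y ∈ A, Matrix.hadamard x y ∈ A)

/-- A coherent Jordan algebra. -/
def IsCoherentJAlgebra (F : Type*) [Field F] [Fintype Ω] [DecidableEq Ω]
    (A : Submodule F (Matrix Ω Ω F)) : Prop :=
  (1 : Matrix Ω Ω F) ∈ A ∧ allOnes F ∈ A ∧ (∀ x ∈ A, xᵀ ∈ A) ∧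
  (∀ x ∈ A, ∀ y ∈ A, jmul F x y ∈ A) ∧ (∀ x ∈ A, ∀ y ∈ A, Matrix.hadamard x y ∈ A)

section Aux
set_option linter.unusedSectionVars false

variable {Ω : Type*} [Fintype Ω] [DecidableEq Ω]

lemma adj_mul_adj_apply (c d : Set (Ω × Ω)) (α β : Ω) :
    (adj ℝ c * adj ℝ d) α β = (cnum c d α β : ℝ) := by
  classical
  have hset : (outSet c α ∩ outSet (transposeRel d) β) = {γ | (α,γ) ∈ c ∧ (γ,β) ∈ d} := by
    ext γ; simp [outSet, transposeRel]
  rw [cnum, hset, Set.ncard_eq_toFinset_card']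
  rw [Matrix.mul_apply]
  have : ∀ γ : Ω, adj ℝ c α γ * adj ℝ d γ β
      = if (α,γ) ∈ c ∧ (γ,β) ∈ d then (1:ℝ) else 0 := by
    intro γ
    simp only [adj, Matrix.of_apply]
    by_cases h1 : (α,γ) ∈ c <;> by_cases h2 : (γ,β) ∈ d <;> simp [h1, h2]
  rw [Finset.sum_congr rfl (fun γ _ => this γ)]
  rw [Finset.sum_boole]
  congr 1
  rw [Set.toFinset_setOf]

lemma sum_adj_row (c : Set (Ω × Ω)) (α : Ω) :
    ∑ γ, adj ℝ c α γ = ((outSet c α).ncard : ℝ) := by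
  classical
  rw [Set.ncard_eq_toFinset_card']
  have : ∀ γ : Ω, adj ℝ c α γ = if γ ∈ outSet c α then (1:ℝ) else 0 := by
    intro γ; simp [adj, outSet]; split_ifs <;> simp_all
  rw [Finset.sum_congr rfl (fun γ _ => this γ), Finset.sum_boole]
  congr 1
  congr 1; convert Set.filter_mem_univ_eq_toFinset (outSet c α)

lemma adj_transpose {c : Set (Ω × Ω)} (hc : transposeRel c = c) :
    (adj ℝ c)ᵀ = adj ℝ c := by
  ext α β
  simp only [Matrix.transpose_apply, adj, Matrix.of_apply]
  have : (β, α) ∈ c ↔ (α, β) ∈ c := by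
    conv_rhs => rw [← hc]
    simp [transposeRel]
  simp only [this]

lemma adj_diag : adj ℝ (diagRel (Set.univ : Set Ω)) = (1 : Matrix Ω Ω ℝ) := by
  ext α β
  simp only [adj, Matrix.of_apply, diagRel, Matrix.one_apply]
  by_cases h : α = β <;> simp [h]

end Aux
section Aux2
set_option linter.unusedSectionVars false
variable {Ω : Type*} [Fintype Ω] [DecidableEq Ω]
variable {P : Set (Set (Ω × Ω))}

lemma class_unique (hP : IsRainbow P) {c d : Set (Ω × Ω)} {p : Ω × Ω}
    (hc : c ∈ P) (hd : d ∈ P) (hpc : p ∈ c) (hpd : p ∈ d) : c = d := by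
  by_contra hne
  have := hP.1.2.1 c hc d hd hne
  have : p ∈ c ∩ d := ⟨hpc, hpd⟩
  rw [hP.1.2.1 c hc d hd hne] at this
  exact this

lemma exists_class (hP : IsRainbow P) (p : Ω × Ω) : ∃ c ∈ P, p ∈ c := by
  have : p ∈ ⋃₀ P := by rw [hP.1.2.2]; trivial
  simpa using this

lemma mem_diagRel {α β : Ω} : (α, β) ∈ diagRel (Set.univ : Set Ω) ↔ α = β := by
  simp [diagRel]

/-- a nondiagonal class has no diagonal points -/
lemma offdiag_ne (hP : IsRainbow P) (hhom : diagRel (Set.univ : Set Ω) ∈ P)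
    {c : Set (Ω × Ω)} (hc : c ∈ P) (hne : c ≠ diagRel (Set.univ : Set Ω))
    {α β : Ω} (h : (α, β) ∈ c) : α ≠ β := by
  rintro rfl
  exact hne (class_unique hP hc hhom h (mem_diagRel.mpr rfl))

/-- distinct classes: c(α) ∩ d(α) = ∅ -/
lemma cnum_self_pt_zero (hP : IsRainbow P) (hsym : ∀ c ∈ P, transposeRel c = c)
    {c d : Set (Ω × Ω)} (hc : c ∈ P) (hd : d ∈ P) (hne : c ≠ d) (α : Ω) :
    cnum c d α α = 0 := by
  rw [cnum, Set.ncard_eq_zero (Set.toFinite _)]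
  ext γ
  simp only [Set.mem_inter_iff, Set.mem_empty_iff_false, iff_false, not_and]
  intro h1 h2
  rw [hsym d hd] at h2
  exact hne (class_unique hP hc hd h1 h2)

lemma cnum_flip (hsym : ∀ c ∈ P, transposeRel c = c)
    {c d : Set (Ω × Ω)} (hc : c ∈ P) (hd : d ∈ P) (α β : Ω) :
    cnum c d α β = cnum d c β α := by
  rw [cnum, cnum, hsym c hc, hsym d hd, Set.inter_comm]

lemma cnum_diag_right (hP : IsRainbow P) (hhom : diagRel (Set.univ : Set Ω) ∈ P)
    {c : Set (Ω × Ω)} (hc : c ∈ P) (α β : Ω) :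
    cnum c (diagRel (Set.univ : Set Ω)) α β = if (α, β) ∈ c then 1 else 0 := by
  have ht : transposeRel (diagRel (Set.univ : Set Ω)) = diagRel (Set.univ : Set Ω) := by
    ext ⟨x, y⟩; simp [transposeRel, diagRel, eq_comm]
  rw [cnum, ht]
  have : outSet (diagRel (Set.univ : Set Ω)) β = {β} := by
    ext γ; simp [outSet, diagRel]
  rw [this]
  by_cases h : (α, β) ∈ c
  · have : outSet c α ∩ {β} = {β} := by
      ext γ; simp only [Set.mem_inter_iff, Set.mem_singleton_iff, outSet, Set.mem_setOf_eq,
        and_iff_right_iff_imp]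
      rintro rfl; exact h
    simp [this, h]
  · have : outSet c α ∩ {β} = ∅ := by
      ext γ; simp only [Set.mem_inter_iff, Set.mem_singleton_iff, outSet, Set.mem_setOf_eq,
        Set.mem_empty_iff_false, iff_false, not_and]
      rintro hγ rfl; exact h hγ
    simp [this, h]

lemma cnum_diag_left (hP : IsRainbow P) (hhom : diagRel (Set.univ : Set Ω) ∈ P)
    {c : Set (Ω × Ω)} (hc : c ∈ P) (α β : Ω) :
    cnum (diagRel (Set.univ : Set Ω)) c α β = if (α, β) ∈ c then 1 else 0 := by
  rw [cnum]
  have : outSet (diagRel (Set.univ : Set Ω)) α = {α} := by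
    ext γ; simp [outSet, diagRel]
  rw [this]
  have hmem : α ∈ outSet (transposeRel c) β ↔ (α, β) ∈ c := by
    simp [outSet, transposeRel]
  by_cases h : (α, β) ∈ c
  · have : ({α} : Set Ω) ∩ outSet (transposeRel c) β = {α} := by
      ext γ; simp only [Set.mem_inter_iff, Set.mem_singleton_iff, and_iff_left_iff_imp]
      rintro rfl; exact hmem.mpr h
    simp [this, h]
  · have : ({α} : Set Ω) ∩ outSet (transposeRel c) β = ∅ := by
      ext γ; simp only [Set.mem_inter_iff, Set.mem_singleton_iff,
        Set.mem_empty_iff_false, iff_false, not_and]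
      rintro rfl hγ; exact h (hmem.mp hγ)
    simp [this, h]

/-- valency: `cnum c c α α` does not depend on `α`, given the Jordan condition. -/
lemma valency_const (hP : IsRainbow P) (hhom : diagRel (Set.univ : Set Ω) ∈ P)
    (hjord : IsJordanCond P) {c : Set (Ω × Ω)} (hc : c ∈ P) (α β : Ω) :
    cnum c c α α = cnum c c β β := by
  have h := hjord c hc c hc _ hhom (α, α) (mem_diagRel.mpr rfl) (β, β) (mem_diagRel.mpr rfl)
  simp only [jnum] at h
  omega

lemma outSet_ncard_eq (hsym : ∀ c ∈ P, transposeRel c = c)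
    {c : Set (Ω × Ω)} (hc : c ∈ P) (α : Ω) :
    (outSet c α).ncard = cnum c c α α := by
  rw [cnum, hsym c hc, Set.inter_self]

end Aux2
section Aux3
set_option linter.unusedSectionVars false
set_option linter.unusedVariables false
variable {Ω : Type*} [Fintype Ω] [DecidableEq Ω]
variable {P : Set (Set (Ω × Ω))}

lemma allOnes_apply (α β : Ω) : (allOnes ℝ : Matrix Ω Ω ℝ) α β = 1 := rfl

lemma smul_allOnes_inj [Nonempty Ω] {x y : ℝ}
    (h : x • (allOnes ℝ : Matrix Ω Ω ℝ) = y • allOnes ℝ) : x = y := by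
  have := congrFun (congrFun h (Classical.arbitrary Ω)) (Classical.arbitrary Ω)
  simpa [allOnes] using this

lemma adj_mul_allOnes (hP : IsRainbow P) (hhom : diagRel (Set.univ : Set Ω) ∈ P)
    (hsym : ∀ c ∈ P, transposeRel c = c) (hjord : IsJordanCond P)
    {c : Set (Ω × Ω)} (hc : c ∈ P) (α₀ : Ω) :
    adj ℝ c * allOnes ℝ = (cnum c c α₀ α₀ : ℝ) • allOnes ℝ := by
  ext α β
  rw [Matrix.mul_apply]
  have h1 : ∀ γ : Ω, adj ℝ c α γ * allOnes ℝ γ β = adj ℝ c α γ := by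
    intro γ; rw [allOnes_apply, mul_one]
  rw [Finset.sum_congr rfl (fun γ _ => h1 γ), sum_adj_row,
    outSet_ncard_eq hsym hc, valency_const hP hhom hjord hc α α₀]
  simp [allOnes]

lemma allOnes_mul_adj (hP : IsRainbow P) (hhom : diagRel (Set.univ : Set Ω) ∈ P)
    (hsym : ∀ c ∈ P, transposeRel c = c) (hjord : IsJordanCond P)
    {c : Set (Ω × Ω)} (hc : c ∈ P) (α₀ : Ω) :
    allOnes ℝ * adj ℝ c = (cnum c c α₀ α₀ : ℝ) • allOnes ℝ := by
  have ht : (allOnes ℝ * adj ℝ c)ᵀ = adj ℝ c * allOnes ℝ := by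
    rw [Matrix.transpose_mul, adj_transpose (hsym c hc)]
    congr 1
  have := congrArg Matrix.transpose ht
  rw [Matrix.transpose_transpose] at this
  rw [this, adj_mul_allOnes hP hhom hsym hjord hc α₀]
  ext α β
  simp [allOnes]

lemma trace_adj (hP : IsRainbow P) (hhom : diagRel (Set.univ : Set Ω) ∈ P)
    {c : Set (Ω × Ω)} (hc : c ∈ P) (hco : c ≠ diagRel (Set.univ : Set Ω)) :
    Matrix.trace (adj ℝ c) = 0 := by
  rw [Matrix.trace]
  apply Finset.sum_eq_zero
  intro α _
  have : (α, α) ∉ c := fun h => offdiag_ne hP hhom hc hco h rfl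
  simp [Matrix.diag, adj, this]

lemma trace_adj_mul_ne (hP : IsRainbow P) (hsym : ∀ c ∈ P, transposeRel c = c)
    {c d : Set (Ω × Ω)} (hc : c ∈ P) (hd : d ∈ P) (hne : c ≠ d) :
    Matrix.trace (adj ℝ c * adj ℝ d) = 0 := by
  rw [Matrix.trace]
  apply Finset.sum_eq_zero
  intro α _
  rw [Matrix.diag, adj_mul_adj_apply, cnum_self_pt_zero hP hsym hc hd hne]
  simp

lemma trace_adj_mul_self (hP : IsRainbow P) (hhom : diagRel (Set.univ : Set Ω) ∈ P)
    (hsym : ∀ c ∈ P, transposeRel c = c) (hjord : IsJordanCond P)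
    {c : Set (Ω × Ω)} (hc : c ∈ P) (α₀ : Ω) :
    Matrix.trace (adj ℝ c * adj ℝ c) = (Fintype.card Ω : ℝ) * (cnum c c α₀ α₀ : ℝ) := by
  rw [Matrix.trace]
  have : ∀ α : Ω, Matrix.diag (adj ℝ c * adj ℝ c) α = (cnum c c α₀ α₀ : ℝ) := by
    intro α
    rw [Matrix.diag, adj_mul_adj_apply, valency_const hP hhom hjord hc α α₀]
  rw [Finset.sum_congr rfl (fun α _ => this α), Finset.sum_const, Finset.card_univ,
    nsmul_eq_mul]

end Aux3
section Endgame

lemma four_mul_le_sq (ka kb : ℕ) : 4*(ka*kb) ≤ (ka+kb)^2 := by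
  rcases le_total ka kb with h|h
  · obtain ⟨k, rfl⟩ := Nat.exists_eq_add_of_le h
    nlinarith [Nat.zero_le (k^2)]
  · obtain ⟨k, rfl⟩ := Nat.exists_eq_add_of_le h
    nlinarith [Nat.zero_le (k^2)]

lemma endgame {ka kb ke X : ℕ} (hka : 1 ≤ ka) (hkb : 1 ≤ kb) (hke : 1 ≤ ke)
    (h : X * (ka+kb+ke)^2 = 2*ka*kb*((ka+kb+ke)+2)) : False := by
  set s := ka+kb+ke with hs
  have hkkpos : 0 < ka*kb := Nat.mul_pos (by omega) (by omega)
  have hABle : 4*(ka*kb) ≤ (ka+kb)^2 := four_mul_le_sq ka kb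
  have h5 : ka + kb + 1 ≤ s := by omega
  rcases Nat.even_or_odd s with ⟨m, hm⟩ | hodd
  · have hm1 : 1 ≤ m := by omega
    have h2 : 4*(X*m^2) = 4*((ka*kb)*(m+1)) := by
      have e1 : 4*(X*m^2) = X*(m+m)^2 := by ring
      have e2 : 4*((ka*kb)*(m+1)) = 2*ka*kb*((m+m)+2) := by ring
      rw [hm] at h
      rw [e1, e2, h]
    have heq : X*m^2 = (ka*kb)*(m+1) := Nat.eq_of_mul_eq_mul_left (by norm_num) h2
    have hcopm : Nat.Coprime m (m+1) := by
      rw [Nat.Coprime, Nat.gcd_self_add_right]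
      exact Nat.gcd_one_right m
    have hcop : Nat.Coprime (m^2) (m+1) := hcopm.pow_left 2
    have hdvd : m^2 ∣ ka*kb := by
      refine hcop.dvd_of_dvd_mul_right ?_
      exact ⟨X, by rw [mul_comm (m^2) X, heq]⟩
    have hge : m^2 ≤ ka*kb := Nat.le_of_dvd hkkpos hdvd
    have h6 : (ka+kb+1)^2 ≤ (2*m)^2 := Nat.pow_le_pow_left (by omega) 2
    nlinarith [h6, hge, hABle]
  · obtain ⟨t, ht⟩ := hodd
    have hcop2 : Nat.Coprime s 2 := by
      refine Nat.coprime_comm.mp (Nat.Prime.coprime_iff_not_dvd Nat.prime_two |>.mpr ?_)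
      omega
    have hcops2 : Nat.Coprime s (s+2) := by
      have hg : Nat.gcd s (2+s) = Nat.gcd s 2 := Nat.gcd_add_self_right s 2
      rw [Nat.Coprime, show s+2 = 2+s by ring, hg]
      exact hcop2
    have hcop : Nat.Coprime (s^2) (2*(s+2)) := (hcop2.mul_right hcops2).pow_left 2
    have hdvd : s^2 ∣ ka*kb := by
      refine hcop.dvd_of_dvd_mul_right ?_
      exact ⟨X, by rw [mul_comm (s^2) X, h]; ring⟩
    have hge : s^2 ≤ ka*kb := Nat.le_of_dvd hkkpos hdvd
    have h6 : (ka+kb+1)^2 ≤ s^2 := Nat.pow_le_pow_left h5 2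
    nlinarith [h6, hge, hABle]

end Endgame
section Core
set_option linter.unusedSectionVars false
set_option linter.unusedVariables false
set_option maxHeartbeats 2000000
variable {Ω : Type*} [Fintype Ω] [DecidableEq Ω]
variable {P : Set (Set (Ω × Ω))}

lemma rank4_commute [Nonempty Ω] (hP : IsRainbow P) (hsym : ∀ c ∈ P, transposeRel c = c)
    (hhom : diagRel (Set.univ : Set Ω) ∈ P) (hjord : IsJordanCond P)
    {a b e : Set (Ω × Ω)} (ha : a ∈ P) (hb : b ∈ P) (he : e ∈ P)
    (hao : a ≠ diagRel Set.univ) (hbo : b ≠ diagRel Set.univ) (heo : e ≠ diagRel Set.univ)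
    (hab : a ≠ b) (hae : a ≠ e) (hbe : b ≠ e)
    (hP4 : P = {diagRel Set.univ, a, b, e}) :
    adj ℝ a * adj ℝ b = adj ℝ b * adj ℝ a := by
  classical
  by_contra hM0
  obtain ⟨pa, hpa⟩ := hP.1.1 a ha
  obtain ⟨pb, hpb⟩ := hP.1.1 b hb
  obtain ⟨pe, hpe⟩ := hP.1.1 e he
  set α₀ : Ω := Classical.arbitrary Ω with hα₀
  set A := adj ℝ a with hA
  set B := adj ℝ b with hB
  set E := adj ℝ e with hE
  set J := (allOnes ℝ : Matrix Ω Ω ℝ) with hJdef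
  have hdiagmem : ((α₀, α₀) : Ω × Ω) ∈ diagRel (Set.univ : Set Ω) := mem_diagRel.mpr rfl
  -- the expansion helper
  have expand : ∀ (N : Matrix Ω Ω ℝ) (g : Ω → Ω → ℕ),
      (∀ α β, N α β = (g α β : ℝ)) →
      (∀ f, f ∈ P → ∀ p, p ∈ f → ∀ q, q ∈ f → g p.1 p.2 = g q.1 q.2) →
      N = (g α₀ α₀ : ℝ) • (1 : Matrix Ω Ω ℝ) + (g pa.1 pa.2 : ℝ) • A
          + (g pb.1 pb.2 : ℝ) • B + (g pe.1 pe.2 : ℝ) • E := by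
    intro N g hg hconst
    ext α β
    obtain ⟨f, hf, hpf⟩ := exists_class hP (α, β)
    have hf4 : f = diagRel Set.univ ∨ f = a ∨ f = b ∨ f = e := by
      rw [hP4] at hf; simpa using hf
    have hadj : ∀ c : Set (Ω × Ω), adj ℝ c α β = if (α, β) ∈ c then 1 else 0 :=
      fun c => rfl
    simp only [Matrix.add_apply, Matrix.smul_apply, smul_eq_mul]
    rcases hf4 with h|h|h|h
    · subst h
      have hαβ : α = β := mem_diagRel.mp hpf
      subst hαβ
      have hna : (α, α) ∉ a := fun hm => hao (class_unique hP ha hhom hm hpf)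
      have hnb : (α, α) ∉ b := fun hm => hbo (class_unique hP hb hhom hm hpf)
      have hne : (α, α) ∉ e := fun hm => heo (class_unique hP he hhom hm hpf)
      rw [hg, hconst _ hhom (α,α) hpf (α₀,α₀) hdiagmem]
      rw [hA, hB, hE, hadj, hadj, hadj, Matrix.one_apply_eq]
      simp [hna, hnb, hne]
    · subst h
      have hne : α ≠ β := offdiag_ne hP hhom ha hao hpf
      have hnb : (α, β) ∉ b := fun hm => hab (class_unique hP ha hb hpf hm)
      have hnee : (α, β) ∉ e := fun hm => hae (class_unique hP ha he hpf hm)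
      rw [hg, hconst _ ha (α,β) hpf pa hpa]
      rw [hA, hB, hE, hadj, hadj, hadj, Matrix.one_apply_ne hne]
      simp [hpf, hnb, hnee]
    · subst h
      have hne : α ≠ β := offdiag_ne hP hhom hb hbo hpf
      have hna : (α, β) ∉ a := fun hm => hab (class_unique hP hb ha hpf hm).symm
      have hnee : (α, β) ∉ e := fun hm => hbe (class_unique hP hb he hpf hm)
      rw [hg, hconst _ hb (α,β) hpf pb hpb]
      rw [hA, hB, hE, hadj, hadj, hadj, Matrix.one_apply_ne hne]
      simp [hpf, hna, hnee]
    · subst h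
      have hne : α ≠ β := offdiag_ne hP hhom he heo hpf
      have hna : (α, β) ∉ a := fun hm => hae (class_unique hP he ha hpf hm).symm
      have hnb : (α, β) ∉ b := fun hm => hbe (class_unique hP he hb hpf hm).symm
      rw [hg, hconst _ he (α,β) hpf pe hpe]
      rw [hA, hB, hE, hadj, hadj, hadj, Matrix.one_apply_ne hne]
      simp [hpf, hna, hnb]
  -- the partition identity
  have hsumJ : (1 : Matrix Ω Ω ℝ) + A + B + E = J := by
    have h := expand J (fun _ _ => 1) (fun α β => by simp [hJdef, allOnes])
      (fun f hf p hp q hq => rfl)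
    rw [h]; push_cast; module
  -- constancy of cnum c c
  have hconst_self : ∀ c, c ∈ P → ∀ f, f ∈ P → ∀ p, p ∈ f → ∀ q, q ∈ f →
      cnum c c p.1 p.2 = cnum c c q.1 q.2 := by
    intro c hc f hf p hp q hq
    have := hjord c hc c hc f hf p hp q hq
    simp only [jnum] at this
    omega
  -- coefficients (naturals)
  set nka := cnum a a α₀ α₀ with hnka
  set a1 := cnum a a pa.1 pa.2 with ha1
  set a2 := cnum a a pb.1 pb.2 with ha2
  set a3 := cnum a a pe.1 pe.2 with ha3
  set nkb := cnum b b α₀ α₀ with hnkb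
  set b1 := cnum b b pa.1 pa.2 with hb1
  set b2 := cnum b b pb.1 pb.2 with hb2
  set b3 := cnum b b pe.1 pe.2 with hb3
  set nke := cnum e e α₀ α₀ with hnke
  set c0 := jnum a b α₀ α₀ with hc0
  set c1 := jnum a b pa.1 pa.2 with hc1
  set c2 := jnum a b pb.1 pb.2 with hc2
  set c4 := jnum a b pe.1 pe.2 with hc4
  -- expansions
  have hA2 : A * A = (nka : ℝ) • (1 : Matrix Ω Ω ℝ) + (a1:ℝ) • A + (a2:ℝ) • B + (a3:ℝ) • E :=
    expand (A*A) (cnum a a) (fun α β => adj_mul_adj_apply a a α β) (hconst_self a ha)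
  have hB2 : B * B = (nkb : ℝ) • (1 : Matrix Ω Ω ℝ) + (b1:ℝ) • A + (b2:ℝ) • B + (b3:ℝ) • E :=
    expand (B*B) (cnum b b) (fun α β => adj_mul_adj_apply b b α β) (hconst_self b hb)
  have hS : A*B + B*A = (c0 : ℝ) • (1 : Matrix Ω Ω ℝ) + (c1:ℝ) • A + (c2:ℝ) • B + (c4:ℝ) • E := by
    refine expand (A*B + B*A) (jnum a b) (fun α β => ?_) (hjord a ha b hb)
    rw [Matrix.add_apply, adj_mul_adj_apply, adj_mul_adj_apply, jnum]
    push_cast; ring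
  have hc0z : c0 = 0 := by
    rw [hc0, jnum, cnum_self_pt_zero hP hsym ha hb hab,
      cnum_self_pt_zero hP hsym hb ha (Ne.symm hab)]
  -- row sums
  have hAJ : A * J = (nka : ℝ) • J := adj_mul_allOnes hP hhom hsym hjord ha α₀
  have hJA : J * A = (nka : ℝ) • J := allOnes_mul_adj hP hhom hsym hjord ha α₀
  have hBJ : B * J = (nkb : ℝ) • J := adj_mul_allOnes hP hhom hsym hjord hb α₀
  have hJB : J * B = (nkb : ℝ) • J := allOnes_mul_adj hP hhom hsym hjord hb α₀
  have hEJ : E * J = (nke : ℝ) • J := adj_mul_allOnes hP hhom hsym hjord he α₀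
  -- scalar equation E1  (row sums of A²)
  have hE1 : (nka : ℝ) + (a1:ℝ)*nka + (a2:ℝ)*nkb + (a3:ℝ)*nke = (nka:ℝ)*nka := by
    apply smul_allOnes_inj (Ω := Ω)
    have h1 : (A*A) * J = ((nka:ℝ)*nka) • J := by
      rw [mul_assoc, hAJ, Matrix.mul_smul, hAJ, smul_smul]
    have h2 : (A*A) * J = ((nka:ℝ) + (a1:ℝ)*nka + (a2:ℝ)*nkb + (a3:ℝ)*nke) • J := by
      rw [hA2]
      simp only [Matrix.add_mul, Matrix.smul_mul, Matrix.one_mul, hAJ, hBJ, hEJ, smul_smul]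
      module
    rw [← h1, ← h2]
  have hE2 : (nkb : ℝ) + (b1:ℝ)*nka + (b2:ℝ)*nkb + (b3:ℝ)*nke = (nkb:ℝ)*nkb := by
    apply smul_allOnes_inj (Ω := Ω)
    have h1 : (B*B) * J = ((nkb:ℝ)*nkb) • J := by
      rw [mul_assoc, hBJ, Matrix.mul_smul, hBJ, smul_smul]
    have h2 : (B*B) * J = ((nkb:ℝ) + (b1:ℝ)*nka + (b2:ℝ)*nkb + (b3:ℝ)*nke) • J := by
      rw [hB2]
      simp only [Matrix.add_mul, Matrix.smul_mul, Matrix.one_mul, hAJ, hBJ, hEJ, smul_smul]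
      module
    rw [← h1, ← h2]
  have hE6 : (c1:ℝ)*nka + (c2:ℝ)*nkb + (c4:ℝ)*nke = 2*(nka:ℝ)*nkb := by
    have hq : ((c0:ℝ) + ((c1:ℝ)*nka + (c2:ℝ)*nkb + (c4:ℝ)*nke)) = 2*(nka:ℝ)*nkb → _ := id
    have h1 : (A*B + B*A) * J = (2*(nka:ℝ)*nkb) • J := by
      rw [Matrix.add_mul, mul_assoc, hBJ, Matrix.mul_smul, hAJ, mul_assoc, hAJ,
        Matrix.mul_smul, hBJ, smul_smul, smul_smul]
      module
    have h2 : (A*B + B*A) * J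
        = ((c0:ℝ) + (c1:ℝ)*nka + (c2:ℝ)*nkb + (c4:ℝ)*nke) • J := by
      rw [hS]
      simp only [Matrix.add_mul, Matrix.smul_mul, Matrix.one_mul, hAJ, hBJ, hEJ, smul_smul]
      module
    have := smul_allOnes_inj (Ω := Ω) (h2.symm.trans h1)
    rw [hc0z] at this
    push_cast at this ⊢
    linarith
  -- trace facts
  have trA : Matrix.trace A = 0 := by rw [hA]; exact trace_adj hP hhom ha hao
  have trB : Matrix.trace B = 0 := by rw [hB]; exact trace_adj hP hhom hb hbo
  have trAB : Matrix.trace (A*B) = 0 := by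
    rw [hA, hB]; exact trace_adj_mul_ne hP hsym ha hb hab
  have trBA : Matrix.trace (B*A) = 0 := by
    rw [hA, hB]; exact trace_adj_mul_ne hP hsym hb ha (Ne.symm hab)
  have trAE : Matrix.trace (A*E) = 0 := by
    rw [hA, hE]; exact trace_adj_mul_ne hP hsym ha he hae
  have trEA : Matrix.trace (E*A) = 0 := by
    rw [hA, hE]; exact trace_adj_mul_ne hP hsym he ha (Ne.symm hae)
  have trBE : Matrix.trace (B*E) = 0 := by
    rw [hB, hE]; exact trace_adj_mul_ne hP hsym hb he hbe
  have trEB : Matrix.trace (E*B) = 0 := by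
    rw [hB, hE]; exact trace_adj_mul_ne hP hsym he hb (Ne.symm hbe)
  have trA2 : Matrix.trace (A*A) = (Fintype.card Ω : ℝ) * (nka : ℝ) := by
    rw [hA]; exact trace_adj_mul_self hP hhom hsym hjord ha α₀
  have trB2 : Matrix.trace (B*B) = (Fintype.card Ω : ℝ) * (nkb : ℝ) := by
    rw [hB]; exact trace_adj_mul_self hP hhom hsym hjord hb α₀
  have hncard : (Fintype.card Ω : ℝ) ≠ 0 := by
    exact_mod_cast Fintype.card_ne_zero
  -- E4 : c1 * nka = 2 * a2 * nkb
  have hE4 : (c1:ℝ) * nka = 2 * (a2:ℝ) * nkb := by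
    have key : Matrix.trace (A*(A*B+B*A)) = 2 * Matrix.trace ((A*A)*B) := by
      rw [mul_add, Matrix.trace_add]
      have t1 : A*(A*B) = (A*A)*B := by rw [mul_assoc]
      have t2 : Matrix.trace (A*(B*A)) = Matrix.trace ((A*A)*B) := by
        rw [← mul_assoc, Matrix.trace_mul_comm, ← mul_assoc]
      rw [t1, t2]; ring
    have hL : Matrix.trace (A*(A*B+B*A)) = (c1:ℝ) * ((Fintype.card Ω : ℝ) * nka) := by
      rw [hS]
      simp only [mul_add, Matrix.mul_smul, Matrix.trace_add, Matrix.trace_smul, mul_one,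
        smul_eq_mul]
      rw [trA, trA2, trAB, trAE]; ring
    have hR : Matrix.trace ((A*A)*B) = (a2:ℝ) * ((Fintype.card Ω : ℝ) * nkb) := by
      rw [hA2]
      simp only [Matrix.add_mul, Matrix.smul_mul, Matrix.one_mul, Matrix.trace_add,
        Matrix.trace_smul, smul_eq_mul]
      rw [trB, trAB, trB2, trEB]; ring
    rw [hL, hR] at key
    apply mul_left_cancel₀ hncard
    linear_combination key
  -- E5 : c2 * nkb = 2 * b1 * nka
  have hE5 : (c2:ℝ) * nkb = 2 * (b1:ℝ) * nka := by
    have key : Matrix.trace (B*(A*B+B*A)) = 2 * Matrix.trace ((B*B)*A) := by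
      rw [mul_add, Matrix.trace_add]
      have t1 : Matrix.trace (B*(A*B)) = Matrix.trace ((B*B)*A) := by
        rw [← mul_assoc, Matrix.trace_mul_comm, ← mul_assoc]
      have t2 : B*(B*A) = (B*B)*A := by rw [mul_assoc]
      rw [t1, t2]; ring
    have hL : Matrix.trace (B*(A*B+B*A)) = (c2:ℝ) * ((Fintype.card Ω : ℝ) * nkb) := by
      rw [hS]
      simp only [mul_add, Matrix.mul_smul, Matrix.trace_add, Matrix.trace_smul, mul_one,
        smul_eq_mul]
      rw [trB, trB2, trBA, trBE]; ring
    have hR : Matrix.trace ((B*B)*A) = (b1:ℝ) * ((Fintype.card Ω : ℝ) * nka) := by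
      rw [hB2]
      simp only [Matrix.add_mul, Matrix.smul_mul, Matrix.one_mul, Matrix.trace_add,
        Matrix.trace_smul, smul_eq_mul]
      rw [trA, trBA, trA2, trEA]; ring
    rw [hL, hR] at key
    apply mul_left_cancel₀ hncard
    linear_combination key
  -- commutator identities
  have hM : A*B - B*A ≠ 0 := sub_ne_zero.mpr hM0
  have hscal : ∀ x : ℝ, x • (A*B - B*A) = 0 → x = 0 := by
    intro x hx
    rcases smul_eq_zero.mp hx with h|h
    · exact h
    · exact absurd h hM
  have hEeq : E = J - 1 - A - B := by rw [← hsumJ]; abel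
  have hAE : A*E - E*A = -(A*B - B*A) := by
    rw [hEeq]
    simp only [Matrix.mul_sub, Matrix.sub_mul, Matrix.mul_one, Matrix.one_mul]
    rw [hAJ, hJA]; abel
  have hBE : B*E - E*B = A*B - B*A := by
    rw [hEeq]
    simp only [Matrix.mul_sub, Matrix.sub_mul, Matrix.mul_one, Matrix.one_mul]
    rw [hBJ, hJB]; abel
  -- D1 : a2 = a3
  have hD1 : (a2:ℝ) = a3 := by
    have hassoc : A*(A*A) - (A*A)*A = 0 := by rw [← mul_assoc]; exact sub_self _
    rw [hA2] at hassoc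
    simp only [Matrix.mul_add, Matrix.add_mul, Matrix.mul_smul, Matrix.smul_mul,
      Matrix.mul_one, Matrix.one_mul] at hassoc
    have h0 : ((a2:ℝ) - a3) • (A*B - B*A) = 0 := by
      linear_combination (norm := module) hassoc - (a3:ℝ) • hAE
    have := hscal _ h0
    linarith
  -- D2 : b1 = b3
  have hD2 : (b1:ℝ) = b3 := by
    have hassoc : B*(B*B) - (B*B)*B = 0 := by rw [← mul_assoc]; exact sub_self _
    rw [hB2] at hassoc
    simp only [Matrix.mul_add, Matrix.add_mul, Matrix.mul_smul, Matrix.smul_mul,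
      Matrix.mul_one, Matrix.one_mul] at hassoc
    have h0 : ((b1:ℝ) - b3) • (A*B - B*A) = 0 := by
      linear_combination (norm := module) (b3:ℝ) • hBE - hassoc
    have := hscal _ h0
    linarith
  -- D4 : c2 - c4 = a1 - a3
  have hD4 : (c2:ℝ) - c4 = (a1:ℝ) - a3 := by
    have hassoc : A*(A*B+B*A) - (A*B+B*A)*A - ((A*A)*B - B*(A*A)) = 0 := by noncomm_ring
    rw [hS, hA2] at hassoc
    simp only [Matrix.mul_add, Matrix.add_mul, Matrix.mul_smul, Matrix.smul_mul,
      Matrix.mul_one, Matrix.one_mul] at hassoc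
    have h0 : ((c2:ℝ) - c4 - a1 + a3) • (A*B - B*A) = 0 := by
      linear_combination (norm := module) hassoc - (c4:ℝ) • hAE - (a3:ℝ) • hBE
    have := hscal _ h0
    linarith
  -- D5 : c4 - c1 = b1 - b2
  have hD5 : (c4:ℝ) - c1 = (b1:ℝ) - b2 := by
    have hassoc : B*(A*B+B*A) - (A*B+B*A)*B - ((B*B)*A - A*(B*B)) = 0 := by noncomm_ring
    rw [hS, hB2] at hassoc
    simp only [Matrix.mul_add, Matrix.add_mul, Matrix.mul_smul, Matrix.smul_mul,
      Matrix.mul_one, Matrix.one_mul] at hassoc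
    have h0 : ((c4:ℝ) - c1 - b3 + b2) • (A*B - B*A) = 0 := by
      linear_combination (norm := module) hassoc - (c4:ℝ) • hBE - (b3:ℝ) • hAE
    have := hscal _ h0
    linarith [hD2]
  -- scalar endgame over ℝ
  have hA1 : (a3:ℝ)*((nka:ℝ)+nkb+nke) + (c2:ℝ)*nka - (c4:ℝ)*nka = (nka:ℝ)*nka - nka := by
    linear_combination hE1 + (nka:ℝ)*hD4 - (nkb:ℝ)*hD1
  have hB1' : (b1:ℝ)*((nka:ℝ)+nkb+nke) + (c1:ℝ)*nkb - (c4:ℝ)*nkb = (nkb:ℝ)*nkb - nkb := by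
    linear_combination hE2 - (nkb:ℝ)*hD5 + (nke:ℝ)*hD2
  have hE4' : (c1:ℝ)*nka = 2*(a3:ℝ)*nkb := by
    linear_combination hE4 + 2*(nkb:ℝ)*hD1
  -- positivity of the valencies
  have hval_pos : ∀ c, c ∈ P → ∀ p : Ω × Ω, p ∈ c → 1 ≤ cnum c c α₀ α₀ := by
    intro c hc p hp
    have h1 : p.2 ∈ outSet c p.1 := hp
    have h2 : 0 < cnum c c p.1 p.1 := by
      rw [cnum, hsym c hc, Set.inter_self]
      exact (Set.ncard_pos (Set.toFinite _)).mpr ⟨p.2, h1⟩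
    have := valency_const hP hhom hjord hc α₀ p.1
    omega
  have hka1 : 1 ≤ nka := hval_pos a ha pa hpa
  have hkb1 : 1 ≤ nkb := hval_pos b hb pb hpb
  have hke1 : 1 ≤ nke := hval_pos e he pe hpe
  -- the determinant-cleared closed form for c4
  have hG3' : ((nka:ℝ)*nkb*nke) * ((c4:ℝ)*((nka:ℝ)+nkb+nke)^2)
      = ((nka:ℝ)*nkb*nke) * (2*(nka:ℝ)*nkb*(((nka:ℝ)+nkb+nke)+2)) := by
    have ka : ℝ := 0
    linear_combination
      (2*(nka:ℝ)*(nkb:ℝ)^3 - 2*(nka:ℝ)*(nkb:ℝ)^2*(nke:ℝ) - 2*(nka:ℝ)^2*(nkb:ℝ)^2) * hA1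
      + (2*(nka:ℝ)^3*(nkb:ℝ) - 2*(nka:ℝ)^2*(nkb:ℝ)*(nke:ℝ) - 2*(nka:ℝ)^2*(nkb:ℝ)^2) * hB1'
      + (-(nka:ℝ)*(nkb:ℝ)*(nke:ℝ)^2 + (nka:ℝ)*(nkb:ℝ)^3 - 2*(nka:ℝ)^2*(nkb:ℝ)*(nke:ℝ)
          - (nka:ℝ)^3*(nkb:ℝ)) * hE4'
      + (-(nka:ℝ)*(nkb:ℝ)*(nke:ℝ)^2 - 2*(nka:ℝ)*(nkb:ℝ)^2*(nke:ℝ) - (nka:ℝ)*(nkb:ℝ)^3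
          + (nka:ℝ)^3*(nkb:ℝ)) * hE5
      + ((nka:ℝ)*(nkb:ℝ)*(nke:ℝ)^2 + 2*(nka:ℝ)*(nkb:ℝ)^2*(nke:ℝ) + (nka:ℝ)*(nkb:ℝ)^3
          + 2*(nka:ℝ)^2*(nkb:ℝ)*(nke:ℝ) - 2*(nka:ℝ)^2*(nkb:ℝ)^2 + (nka:ℝ)^3*(nkb:ℝ)) * hE6
  have hprod_ne : ((nka:ℝ)*nkb*nke) ≠ 0 := by
    have : (0:ℝ) < (nka:ℝ)*nkb*nke := by
      have h1 : (0:ℝ) < nka := by exact_mod_cast hka1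
      have h2 : (0:ℝ) < nkb := by exact_mod_cast hkb1
      have h3 : (0:ℝ) < nke := by exact_mod_cast hke1
      positivity
    linarith
  have hG3 : (c4:ℝ)*((nka:ℝ)+nkb+nke)^2 = 2*(nka:ℝ)*nkb*(((nka:ℝ)+nkb+nke)+2) :=
    mul_left_cancel₀ hprod_ne hG3'
  have hNat : c4 * (nka+nkb+nke)^2 = 2*nka*nkb*((nka+nkb+nke)+2) := by
    exact_mod_cast hG3
  exact endgame hka1 hkb1 hke1 hNat

end Core
section Final
set_option linter.unusedSectionVars false
set_option linter.unusedVariables false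
variable {Ω : Type*} [Fintype Ω] [DecidableEq Ω]
variable {P : Set (Set (Ω × Ω))}

lemma rank3_commute [Nonempty Ω] (hP : IsRainbow P) (hsym : ∀ c ∈ P, transposeRel c = c)
    (hhom : diagRel (Set.univ : Set Ω) ∈ P) (hjord : IsJordanCond P)
    {a b : Set (Ω × Ω)} (ha : a ∈ P) (hb : b ∈ P)
    (hao : a ≠ diagRel Set.univ) (hbo : b ≠ diagRel Set.univ) (hab : a ≠ b)
    (hP3 : P = {diagRel Set.univ, a, b}) :
    adj ℝ a * adj ℝ b = adj ℝ b * adj ℝ a := by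
  classical
  set α₀ : Ω := Classical.arbitrary Ω with hα₀
  set A := adj ℝ a with hA
  set B := adj ℝ b with hB
  set J := (allOnes ℝ : Matrix Ω Ω ℝ) with hJdef
  have hsumJ : (1 : Matrix Ω Ω ℝ) + A + B = J := by
    ext α β
    obtain ⟨f, hf, hpf⟩ := exists_class hP (α, β)
    have hf3 : f = diagRel Set.univ ∨ f = a ∨ f = b := by
      rw [hP3] at hf; simpa using hf
    have hadj : ∀ c : Set (Ω × Ω), adj ℝ c α β = if (α, β) ∈ c then 1 else 0 :=
      fun c => rfl
    simp only [Matrix.add_apply]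
    rcases hf3 with h|h|h
    · subst h
      have hαβ : α = β := mem_diagRel.mp hpf
      subst hαβ
      have hna : (α, α) ∉ a := fun hm => hao (class_unique hP ha hhom hm hpf)
      have hnb : (α, α) ∉ b := fun hm => hbo (class_unique hP hb hhom hm hpf)
      rw [hA, hB, hadj, hadj, Matrix.one_apply_eq]
      simp [hna, hnb, hJdef, allOnes]
    · subst h
      have hne : α ≠ β := offdiag_ne hP hhom ha hao hpf
      have hnb : (α, β) ∉ b := fun hm => hab (class_unique hP ha hb hpf hm)
      rw [hA, hB, hadj, hadj, Matrix.one_apply_ne hne]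
      simp [hpf, hnb, hJdef, allOnes]
    · subst h
      have hne : α ≠ β := offdiag_ne hP hhom hb hbo hpf
      have hna : (α, β) ∉ a := fun hm => hab (class_unique hP hb ha hpf hm).symm
      rw [hA, hB, hadj, hadj, Matrix.one_apply_ne hne]
      simp [hpf, hna, hJdef, allOnes]
  have hAJ : A * J = (cnum a a α₀ α₀ : ℝ) • J := adj_mul_allOnes hP hhom hsym hjord ha α₀
  have hJA : J * A = (cnum a a α₀ α₀ : ℝ) • J := allOnes_mul_adj hP hhom hsym hjord ha α₀
  have hBeq : B = J - 1 - A := by rw [← hsumJ]; abel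
  rw [hBeq]
  simp only [Matrix.mul_sub, Matrix.sub_mul, Matrix.mul_one, Matrix.one_mul]
  rw [hAJ, hJA]

lemma commute_nondiag [Nonempty Ω] (hP : IsRainbow P) (hsym : ∀ c ∈ P, transposeRel c = c)
    (hhom : diagRel (Set.univ : Set Ω) ∈ P) (hrank : P.ncard ≤ 4) (hjord : IsJordanCond P)
    {c d : Set (Ω × Ω)} (hc : c ∈ P) (hd : d ∈ P)
    (hco : c ≠ diagRel Set.univ) (hdo : d ≠ diagRel Set.univ) (hcd : c ≠ d) :
    adj ℝ c * adj ℝ d = adj ℝ d * adj ℝ c := by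
  classical
  by_cases hex : ∃ e ∈ P, e ∉ ({diagRel Set.univ, c, d} : Set (Set (Ω × Ω)))
  · obtain ⟨e, he, hne⟩ := hex
    have heo : e ≠ diagRel Set.univ := by intro h; exact hne (by simp [h])
    have hec : e ≠ c := by intro h; exact hne (by simp [h])
    have hed : e ≠ d := by intro h; exact hne (by simp [h])
    have hsub : ({diagRel Set.univ, c, d, e} : Set (Set (Ω × Ω))) ⊆ P := by
      intro x hx
      simp only [Set.mem_insert_iff, Set.mem_singleton_iff] at hx
      rcases hx with rfl|rfl|rfl|rfl
      exacts [hhom, hc, hd, he]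
    have h4 : ({diagRel Set.univ, c, d, e} : Set (Set (Ω × Ω))).ncard = 4 := by
      rw [Set.ncard_insert_of_notMem (by simp [Ne.symm hco, Ne.symm hdo, Ne.symm heo]),
        Set.ncard_insert_of_notMem (by simp [hcd, Ne.symm hec]),
        Set.ncard_insert_of_notMem (by simp [Ne.symm hed]), Set.ncard_singleton]
    have hP4 : P = {diagRel Set.univ, c, d, e} :=
      (Set.eq_of_subset_of_ncard_le hsub (by rw [h4]; exact hrank) (Set.toFinite P)).symm
    exact rank4_commute hP hsym hhom hjord hc hd he hco hdo heo hcd hec.symm hed.symm hP4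
  · push_neg at hex
    have hP3 : P = {diagRel Set.univ, c, d} := by
      apply Set.Subset.antisymm
      · intro x hx; exact hex x hx
      · intro x hx
        simp only [Set.mem_insert_iff, Set.mem_singleton_iff] at hx
        rcases hx with rfl|rfl|rfl
        exacts [hhom, hc, hd]
    exact rank3_commute hP hsym hhom hjord hc hd hco hdo hcd hP3

lemma jordan_to_coherent [Nonempty Ω] (hP : IsRainbow P)
    (hsym : ∀ c ∈ P, transposeRel c = c)
    (hhom : diagRel (Set.univ : Set Ω) ∈ P) (hrank : P.ncard ≤ 4)
    (hjord : IsJordanCond P) : IsCoherentCond P := by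
  classical
  intro c hc d hd f hf p hp q hq
  have hind : ∀ g, g ∈ P → ((p.1, p.2) ∈ g ↔ (q.1, q.2) ∈ g) := by
    intro g hg
    constructor
    · intro h
      have : f = g := class_unique hP hf hg hp h
      subst this; exact hq
    · intro h
      have : f = g := class_unique hP hf hg hq h
      subst this; exact hp
  by_cases hco : c = diagRel Set.univ
  · subst hco
    rw [cnum_diag_left hP hhom hd, cnum_diag_left hP hhom hd]
    simp only [hind d hd]
  by_cases hdo : d = diagRel Set.univ
  · subst hdo
    rw [cnum_diag_right hP hhom hc, cnum_diag_right hP hhom hc]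
    simp only [hind c hc]
  by_cases hcd : c = d
  · subst hcd
    have := hjord c hc c hc f hf p hp q hq
    simp only [jnum] at this
    omega
  · have hcomm := commute_nondiag hP hsym hhom hrank hjord hc hd hco hdo hcd
    have hub : ∀ α β : Ω, cnum c d α β = cnum d c α β := by
      intro α β
      have h := congrFun (congrFun hcomm α) β
      rw [adj_mul_adj_apply, adj_mul_adj_apply] at h
      exact_mod_cast h
    have hj := hjord c hc d hd f hf p hp q hq
    have h1 := hub p.1 p.2
    have h2 := hub q.1 q.2
    simp only [jnum] at hj
    omega

lemma coherent_to_jordan (hcoh : IsCoherentCond P) : IsJordanCond P := by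
  intro c hc d hd f hf p hp q hq
  rw [jnum, jnum, hcoh c hc d hd f hf p hp q hq, hcoh d hd c hc f hf p hp q hq]

lemma coherent_commute (hP : IsRainbow P) (hsym : ∀ c ∈ P, transposeRel c = c)
    (hcoh : IsCoherentCond P) {c d : Set (Ω × Ω)} (hc : c ∈ P) (hd : d ∈ P) :
    adj ℝ c * adj ℝ d = adj ℝ d * adj ℝ c := by
  ext α β
  rw [adj_mul_adj_apply, adj_mul_adj_apply]
  norm_cast
  obtain ⟨f, hf, hpf⟩ := exists_class hP (α, β)
  have hqf : ((β, α) : Ω × Ω) ∈ f := by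
    rw [← hsym f hf]; exact hpf
  rw [cnum_flip hsym hc hd α β]
  exact hcoh d hd c hc f hf (β, α) hqf (α, β) hpf

end Final
theorem statement10 {Ω : Type*} [Fintype Ω] [DecidableEq Ω] [Nonempty Ω]
    (P : Set (Set (Ω × Ω))) (hrainbow : IsRainbow P)
    (hsym : ∀ c ∈ P, transposeRel c = c)
    (hhom : diagRel (Set.univ : Set Ω) ∈ P)
    (hrank : P.ncard ≤ 4) :
    (IsJordanCond P ↔ IsCoherentCond P) ∧
    (IsCoherentCond P →
      ∀ c ∈ P, ∀ d ∈ P, adj ℝ c * adj ℝ d = adj ℝ d * adj ℝ c) := by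
  constructor
  · exact ⟨fun hjord => jordan_to_coherent hrainbow hsym hhom hrank hjord,
      fun hcoh => coherent_to_jordan hcoh⟩
  · intro hcoh c hc d hd
    exact coherent_commute hrainbow hsym hcoh hc hd

end JordanPaper

end
end

section
/- Let Ω be a nonempty finite set and J ⊆ M_Ω(ℝ) a linear subspace consisting of symmetric matrices and closed under the Jordan product A★B = (AB+BA)/2. Assume there is an ℝ-linear bijection φ from ℝ × ℝ × Sym_2(ℝ) onto J with φ(x★y) = φ(x)★φ(y), where the product on ℝ × ℝ × Sym_2(ℝ) is componentwise with A★B = (AB+BA)/2 on the symmetric 2×2 matrices Sym_2(ℝ). Then the smallest linear subspace of M_Ω(ℝ) containing J and closed under ordinary matrix multiplication is 6-dimensional and is isomorphic, as an ℝ-algebra, to ℝ × ℝ × M_2(ℝ). -/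
open Matrix

noncomputable section

namespace JordanPaper

open scoped Classical

variable {Ω : Type*}

/-- The space of symmetric `2 × 2` real matrices. -/
def symMat2 : Submodule ℝ (Matrix (Fin 2) (Fin 2) ℝ) where
  carrier := {A | Aᵀ = A}
  add_mem' := by
    intro a b ha hb
    simp only [Set.mem_setOf_eq] at ha hb ⊢
    rw [Matrix.transpose_add, ha, hb]
  zero_mem' := by
    simp only [Set.mem_setOf_eq, Matrix.transpose_zero]
  smul_mem' := by
    intro c a ha
    simp only [Set.mem_setOf_eq] at ha ⊢
    rw [Matrix.transpose_smul, ha]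

lemma mem_symMat2 {A : Matrix (Fin 2) (Fin 2) ℝ} : A ∈ symMat2 ↔ Aᵀ = A := Iff.rfl

/-- The componentwise product on `ℝ × ℝ × Sym₂(ℝ)`, with the Jordan product on the
third component and ordinary multiplication on the two `ℝ` factors. -/
def domStar (x y : ℝ × ℝ × symMat2) : ℝ × ℝ × symMat2 :=
  ⟨x.1 * y.1, x.2.1 * y.2.1,
    ⟨jmul ℝ (x.2.2 : Matrix (Fin 2) (Fin 2) ℝ) (y.2.2 : Matrix (Fin 2) (Fin 2) ℝ), by
      have hx : ((x.2.2 : Matrix (Fin 2) (Fin 2) ℝ))ᵀ = (x.2.2 : Matrix (Fin 2) (Fin 2) ℝ) :=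
        x.2.2.2
      have hy : ((y.2.2 : Matrix (Fin 2) (Fin 2) ℝ))ᵀ = (y.2.2 : Matrix (Fin 2) (Fin 2) ℝ) :=
        y.2.2.2
      rw [mem_symMat2]
      simp only [jmul, Matrix.transpose_smul, Matrix.transpose_add, Matrix.transpose_mul,
        hx, hy]
      rw [add_comm]⟩⟩



lemma half_eq {M : Type*} [AddCommGroup M] [Module ℝ M] {x y : M} (h : x + x = (2:ℝ) • y) :
    x = y := by
  have h2 : (2:ℝ) • x = (2:ℝ) • y := by rw [two_smul]; exact h
  exact smul_right_injective M two_ne_zero h2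

lemma idem_orth {n : Type*} [Fintype n] [DecidableEq n] {e y : Matrix n n ℝ}
    (he : e * e = e) (h : e * y + y * e = 0) : e * y = 0 ∧ y * e = 0 := by
  have h1 : e * y + e * y * e = 0 := by
    have h' : e * (e * y + y * e) = 0 := by rw [h, mul_zero]
    rw [mul_add, ← mul_assoc, he, ← mul_assoc] at h'
    exact h'
  have h2 : e * y * e + y * e = 0 := by
    have h' : (e * y + y * e) * e = 0 := by rw [h, zero_mul]
    rw [add_mul, mul_assoc y, he] at h'
    exact h'
  have h3 : e * y = y * e :=
    (eq_neg_of_add_eq_zero_left h1).trans (eq_neg_of_add_eq_zero_right h2).symm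
  rw [h3] at h
  have h4 : y * e = 0 := half_eq (by rw [smul_zero]; exact h)
  exact ⟨h3.trans h4, h4⟩

lemma corner_unit {n : Type*} [Fintype n] [DecidableEq n] {p a : Matrix n n ℝ}
    (hp : p * p = p) (h : p * a + a * p = a + a) : p * a = a ∧ a * p = a := by
  have h1 : p * a * p = p * a := by
    have h' : p * (p * a + a * p) = p * (a + a) := by rw [h]
    rw [mul_add, ← mul_assoc, hp, ← mul_assoc, mul_add] at h'
    exact add_left_cancel h'
  have h2 : p * a * p = a * p := by
    have h' : (p * a + a * p) * p = (a + a) * p := by rw [h]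
    rw [add_mul, mul_assoc a, hp, add_mul] at h'
    exact add_right_cancel h'
  have h3 : p * a = a * p := h1.symm.trans h2
  rw [← h3] at h
  have h4 : p * a = a := half_eq (by rw [h, two_smul])
  exact ⟨h4, h3 ▸ h4⟩


set_option maxHeartbeats 1000000 in
theorem statement12 {Ω : Type*} [Fintype Ω] [DecidableEq Ω] [Nonempty Ω]
    (J : Submodule ℝ (Matrix Ω Ω ℝ))
    (hsym : ∀ x ∈ J, xᵀ = x)
    (hclosed : ∀ x ∈ J, ∀ y ∈ J, jmul ℝ x y ∈ J)
    (φ : (ℝ × ℝ × symMat2) →ₗ[ℝ] Matrix Ω Ω ℝ)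
    (hinj : Function.Injective φ)
    (hrange : LinearMap.range φ = J)
    (hmul : ∀ x y : ℝ × ℝ × symMat2, φ (domStar x y) = jmul ℝ (φ x) (φ y)) :
    let B := sInf {A : Submodule ℝ (Matrix Ω Ω ℝ) | J ≤ A ∧ ∀ x ∈ A, ∀ y ∈ A, x * y ∈ A}
    Module.finrank ℝ B = 6 ∧
    ∃ ψ : (ℝ × ℝ × Matrix (Fin 2) (Fin 2) ℝ) →ₗ[ℝ] Matrix Ω Ω ℝ,
      Function.Injective ψ ∧ LinearMap.range ψ = B ∧
      ∀ x y : ℝ × ℝ × Matrix (Fin 2) (Fin 2) ℝ,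
        ψ (x.1 * y.1, x.2.1 * y.2.1, x.2.2 * y.2.2) = ψ x * ψ y := by
  intro B
  -- basic 2x2 symmetric matrices
  have hIm : (1 : Matrix (Fin 2) (Fin 2) ℝ) ∈ symMat2 := by
    rw [mem_symMat2, Matrix.transpose_one]
  have hS1m : (!![0,1;1,0] : Matrix (Fin 2) (Fin 2) ℝ) ∈ symMat2 := by
    rw [mem_symMat2]; ext i j; fin_cases i <;> fin_cases j <;> simp
  have hS3m : (!![1,0;0,-1] : Matrix (Fin 2) (Fin 2) ℝ) ∈ symMat2 := by
    rw [mem_symMat2]; ext i j; fin_cases i <;> fin_cases j <;> simp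
  set I2 : symMat2 := ⟨1, hIm⟩ with hI2
  set S1 : symMat2 := ⟨!![0,1;1,0], hS1m⟩ with hS1
  set S3 : symMat2 := ⟨!![1,0;0,-1], hS3m⟩ with hS3
  set e1 := φ (1, 0, 0) with he1
  set e2 := φ (0, 1, 0) with he2
  set p := φ (0, 0, I2) with hp
  set a := φ (0, 0, S1) with ha
  set b := φ (0, 0, S3) with hb
  set q := b * a with hq
  -- key multiplication identity
  have key : ∀ x y : ℝ × ℝ × symMat2,
      φ x * φ y + φ y * φ x = (2:ℝ) • φ (domStar x y) := by
    intro x y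
    have h := hmul x y
    rw [jmul] at h
    have h2 := congrArg (fun z => (2:ℝ) • z) h
    simp only [smul_smul] at h2
    norm_num at h2
    exact h2.symm

  -- 2x2 jmul computations
  have jm : ∀ x y z : Matrix (Fin 2) (Fin 2) ℝ, x * y + y * x = z + z → jmul ℝ x y = z := by
    intro x y z h
    rw [jmul, h, ← two_smul ℝ, smul_smul]
    norm_num
  have j11 : jmul ℝ (1 : Matrix (Fin 2) (Fin 2) ℝ) 1 = 1 := by
    apply jm; simp
  have j1S1 : jmul ℝ (1 : Matrix (Fin 2) (Fin 2) ℝ) !![0,1;1,0] = !![0,1;1,0] := by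
    apply jm; simp
  have j1S3 : jmul ℝ (1 : Matrix (Fin 2) (Fin 2) ℝ) !![1,0;0,-1] = !![1,0;0,-1] := by
    apply jm; simp
  have jS1S1 : jmul ℝ (!![0,1;1,0] : Matrix (Fin 2) (Fin 2) ℝ) !![0,1;1,0] = 1 := by
    apply jm; ext i j; fin_cases i <;> fin_cases j <;>
      simp [Matrix.mul_apply, Fin.sum_univ_two, Matrix.one_apply]
  have jS3S3 : jmul ℝ (!![1,0;0,-1] : Matrix (Fin 2) (Fin 2) ℝ) !![1,0;0,-1] = 1 := by
    apply jm; ext i j; fin_cases i <;> fin_cases j <;>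
      simp [Matrix.mul_apply, Fin.sum_univ_two, Matrix.one_apply]
  have jS1S3 : jmul ℝ (!![0,1;1,0] : Matrix (Fin 2) (Fin 2) ℝ) !![1,0;0,-1] = 0 := by
    apply jm; ext i j; fin_cases i <;> fin_cases j <;>
      simp [Matrix.mul_apply, Fin.sum_univ_two]
  have j00 : jmul ℝ (0 : Matrix (Fin 2) (Fin 2) ℝ) 0 = 0 := by apply jm; simp
  have j0l : ∀ x : Matrix (Fin 2) (Fin 2) ℝ, jmul ℝ 0 x = 0 := by
    intro x; apply jm; simp
  have j0r : ∀ x : Matrix (Fin 2) (Fin 2) ℝ, jmul ℝ x 0 = 0 := by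
    intro x; apply jm; simp
  -- multiplication table

  -- domStar helper
  have dst : ∀ (s t s' t' : ℝ) (w w' u : symMat2),
      jmul ℝ (w : Matrix (Fin 2) (Fin 2) ℝ) (w' : Matrix (Fin 2) (Fin 2) ℝ) = (u : Matrix (Fin 2) (Fin 2) ℝ) →
      domStar (s,t,w) (s',t',w') = (s*s', t*t', u) := by
    intro s t s' t' w w' u h
    simp only [domStar]
    exact Prod.ext rfl (Prod.ext rfl (Subtype.ext h))
  have c0 : ((0 : symMat2) : Matrix (Fin 2) (Fin 2) ℝ) = 0 := rfl
  have cI : ((I2 : symMat2) : Matrix (Fin 2) (Fin 2) ℝ) = 1 := rfl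
  have cS1 : ((S1 : symMat2) : Matrix (Fin 2) (Fin 2) ℝ) = !![0,1;1,0] := rfl
  have cS3 : ((S3 : symMat2) : Matrix (Fin 2) (Fin 2) ℝ) = !![1,0;0,-1] := rfl
  -- products of basis elements
  have m_e1e1 : e1 * e1 = e1 := by
    apply half_eq; rw [key, dst 1 0 1 0 0 0 0 (by rw [c0, j00])]; norm_num [he1]
  have m_e2e2 : e2 * e2 = e2 := by
    apply half_eq; rw [key, dst 0 1 0 1 0 0 0 (by rw [c0, j00])]; norm_num [he2]
  have m_pp : p * p = p := by
    apply half_eq; rw [key, dst 0 0 0 0 I2 I2 I2 (by rw [cI, j11])]; norm_num [hp]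
  have m_aa : a * a = p := by
    apply half_eq; rw [key, dst 0 0 0 0 S1 S1 I2 (by rw [cS1, cI, jS1S1])]; norm_num [hp]
  have m_bb : b * b = p := by
    apply half_eq; rw [key, dst 0 0 0 0 S3 S3 I2 (by rw [cS3, cI, jS3S3])]; norm_num [hp]
  have o_ab : a * b + b * a = 0 := by
    have h := key (0,0,S1) (0,0,S3)
    rw [dst 0 0 0 0 S1 S3 0 (by rw [cS1, cS3, c0, jS1S3])] at h
    simpa [show ((0,0,0) : ℝ × ℝ × symMat2) = 0 from rfl] using h
  have o_12 : e1 * e2 + e2 * e1 = 0 := by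
    have h := key (1,0,0) (0,1,0)
    rw [dst 1 0 0 1 0 0 0 (by rw [c0, j00])] at h
    simpa [show ((0,0,0) : ℝ × ℝ × symMat2) = 0 from rfl] using h
  have o_1p : e1 * p + p * e1 = 0 := by
    have h := key (1,0,0) (0,0,I2)
    rw [dst 1 0 0 0 0 I2 0 (by rw [c0, cI, j0l])] at h
    simpa [show ((0,0,0) : ℝ × ℝ × symMat2) = 0 from rfl] using h
  have o_1a : e1 * a + a * e1 = 0 := by
    have h := key (1,0,0) (0,0,S1)
    rw [dst 1 0 0 0 0 S1 0 (by rw [c0, cS1, j0l])] at h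
    simpa [show ((0,0,0) : ℝ × ℝ × symMat2) = 0 from rfl] using h
  have o_1b : e1 * b + b * e1 = 0 := by
    have h := key (1,0,0) (0,0,S3)
    rw [dst 1 0 0 0 0 S3 0 (by rw [c0, cS3, j0l])] at h
    simpa [show ((0,0,0) : ℝ × ℝ × symMat2) = 0 from rfl] using h
  have o_2p : e2 * p + p * e2 = 0 := by
    have h := key (0,1,0) (0,0,I2)
    rw [dst 0 1 0 0 0 I2 0 (by rw [c0, cI, j0l])] at h
    simpa [show ((0,0,0) : ℝ × ℝ × symMat2) = 0 from rfl] using h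
  have o_2a : e2 * a + a * e2 = 0 := by
    have h := key (0,1,0) (0,0,S1)
    rw [dst 0 1 0 0 0 S1 0 (by rw [c0, cS1, j0l])] at h
    simpa [show ((0,0,0) : ℝ × ℝ × symMat2) = 0 from rfl] using h
  have o_2b : e2 * b + b * e2 = 0 := by
    have h := key (0,1,0) (0,0,S3)
    rw [dst 0 1 0 0 0 S3 0 (by rw [c0, cS3, j0l])] at h
    simpa [show ((0,0,0) : ℝ × ℝ × symMat2) = 0 from rfl] using h
  have u_pa : p * a + a * p = a + a := by
    have h := key (0,0,I2) (0,0,S1)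
    rw [dst 0 0 0 0 I2 S1 S1 (by rw [cI, cS1, j1S1])] at h
    rw [h, two_smul]; norm_num [ha]
  have u_pb : p * b + b * p = b + b := by
    have h := key (0,0,I2) (0,0,S3)
    rw [dst 0 0 0 0 I2 S3 S3 (by rw [cI, cS3, j1S3])] at h
    rw [h, two_smul]; norm_num [hb]
  -- resolve orthogonality and units
  obtain ⟨m_12, m_21⟩ := idem_orth m_e1e1 o_12
  obtain ⟨m_1p, m_p1⟩ := idem_orth m_e1e1 o_1p
  obtain ⟨m_1a, m_a1⟩ := idem_orth m_e1e1 o_1a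
  obtain ⟨m_1b, m_b1⟩ := idem_orth m_e1e1 o_1b
  obtain ⟨m_2p, m_p2⟩ := idem_orth m_e2e2 o_2p
  obtain ⟨m_2a, m_a2⟩ := idem_orth m_e2e2 o_2a
  obtain ⟨m_2b, m_b2⟩ := idem_orth m_e2e2 o_2b
  obtain ⟨m_pa, m_ap⟩ := corner_unit m_pp u_pa
  obtain ⟨m_pb, m_bp⟩ := corner_unit m_pp u_pb
  have m_ab : a * b = -q := by rw [hq]; exact eq_neg_of_add_eq_zero_left o_ab
  -- q products
  have m_qa : q * a = b := by rw [hq, mul_assoc, m_aa, m_bp]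
  have m_bq : b * q = a := by rw [hq, ← mul_assoc, m_bb, m_pa]
  have m_aq : a * q = -b := by rw [hq, ← mul_assoc, m_ab, neg_mul, m_qa]
  have m_qb : q * b = -a := by rw [hq, mul_assoc, m_ab, mul_neg, m_bq]
  have m_qq : q * q = -p := by
    rw [hq, mul_assoc b a (b*a), ← mul_assoc a b a, m_ab, neg_mul, m_qa, mul_neg, m_bb]
  have m_pq : p * q = q := by rw [hq, ← mul_assoc, m_pb]
  have m_qp : q * p = q := by rw [hq, mul_assoc, m_ap]
  have m_1q : e1 * q = 0 := by rw [hq, ← mul_assoc, m_1b, zero_mul]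
  have m_q1 : q * e1 = 0 := by rw [hq, mul_assoc, m_a1, mul_zero]
  have m_2q : e2 * q = 0 := by rw [hq, ← mul_assoc, m_2b, zero_mul]
  have m_q2 : q * e2 = 0 := by rw [hq, mul_assoc, m_a2, mul_zero]

  -- membership and symmetry facts
  have memJ : ∀ v : ℝ × ℝ × symMat2, φ v ∈ J := fun v =>
    hrange ▸ LinearMap.mem_range_self φ v
  have t_e1 : e1ᵀ = e1 := hsym _ (memJ (1,0,0))
  have t_e2 : e2ᵀ = e2 := hsym _ (memJ (0,1,0))
  have t_p : pᵀ = p := hsym _ (memJ (0,0,I2))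
  have t_a : aᵀ = a := hsym _ (memJ (0,0,S1))
  have t_b : bᵀ = b := hsym _ (memJ (0,0,S3))
  have t_q : qᵀ = -q := by rw [hq, Matrix.transpose_mul, t_a, t_b, m_ab]
  -- nondegeneracy
  have pne : p ≠ 0 := by
    intro h0
    have h1 : φ (0,0,I2) = φ 0 := by rw [← hp, h0, map_zero]
    have h2 := hinj h1
    have h3 : (I2 : Matrix (Fin 2) (Fin 2) ℝ) = 0 := by
      have := congrArg (fun v : ℝ × ℝ × symMat2 => (v.2.2 : Matrix (Fin 2) (Fin 2) ℝ)) h2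
      simpa using this
    rw [cI] at h3
    have := congrFun (congrFun h3 0) 0
    simp [Matrix.one_apply] at this
  have qne : q ≠ 0 := by
    intro h0
    apply pne
    have h1 := m_qq
    rw [h0, mul_zero] at h1
    exact neg_eq_zero.mp h1.symm
  -- define ψ
  obtain ⟨ψ, ψ_apply⟩ : ∃ ψ : (ℝ × ℝ × Matrix (Fin 2) (Fin 2) ℝ) →ₗ[ℝ] Matrix Ω Ω ℝ,
      ∀ x : ℝ × ℝ × Matrix (Fin 2) (Fin 2) ℝ,
      ψ x = x.1 • e1 + x.2.1 • e2 + ((x.2.2 0 0 + x.2.2 1 1)/2) • p +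
        ((x.2.2 0 1 + x.2.2 1 0)/2) • a + ((x.2.2 0 0 - x.2.2 1 1)/2) • b +
        ((x.2.2 0 1 - x.2.2 1 0)/2) • q := by
    refine ⟨⟨⟨fun x => x.1 • e1 + x.2.1 • e2 + ((x.2.2 0 0 + x.2.2 1 1)/2) • p +
        ((x.2.2 0 1 + x.2.2 1 0)/2) • a + ((x.2.2 0 0 - x.2.2 1 1)/2) • b +
        ((x.2.2 0 1 - x.2.2 1 0)/2) • q, ?_⟩, ?_⟩, fun x => rfl⟩
    · intro x y
      simp only [Prod.fst_add, Prod.snd_add, Matrix.add_apply]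
      match_scalars <;> ring
    · intro c x
      simp only [Prod.smul_fst, Prod.smul_snd, Matrix.smul_apply, smul_eq_mul,
        RingHom.id_apply]
      match_scalars <;> ring
  -- multiplicativity
  have hmulψ : ∀ x y : ℝ × ℝ × Matrix (Fin 2) (Fin 2) ℝ,
      ψ (x.1 * y.1, x.2.1 * y.2.1, x.2.2 * y.2.2) = ψ x * ψ y := by
    intro x y
    rw [ψ_apply, ψ_apply, ψ_apply]
    simp only [Matrix.mul_apply, Fin.sum_univ_two]
    simp only [add_mul, mul_add, Matrix.smul_mul, Matrix.mul_smul,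
      m_e1e1, m_e2e2, m_pp, m_aa, m_bb, m_ab, m_12, m_21, m_1p, m_p1, m_1a, m_a1,
      m_1b, m_b1, m_2p, m_p2, m_2a, m_a2, m_2b, m_b2, m_pa, m_ap, m_pb, m_bp,
      m_qa, m_bq, m_aq, m_qb, m_qq, m_pq, m_qp, m_1q, m_q1, m_2q, m_q2, ← hq,
      smul_zero, add_zero, zero_add, smul_neg]
    match_scalars <;> ring
  -- injectivity
  have hker : ∀ x : ℝ × ℝ × Matrix (Fin 2) (Fin 2) ℝ, ψ x = 0 → x = 0 := by
    intro x hx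
    rw [ψ_apply] at hx
    have hxT := congrArg Matrix.transpose hx
    simp only [Matrix.transpose_add, Matrix.transpose_smul, t_e1, t_e2, t_p, t_a, t_b, t_q,
      Matrix.transpose_zero, smul_neg] at hxT
    have hδq : (x.2.2 0 1 - x.2.2 1 0) • q = 0 := by
      linear_combination (norm := module) hx - hxT
    rcases smul_eq_zero.mp hδq with hδ0 | hq0
    swap
    · exact absurd hq0 qne
    have hδ0' : x.2.2 0 1 = x.2.2 1 0 := sub_eq_zero.mp hδ0
    set α := (x.2.2 0 0 + x.2.2 1 1)/2 with hα
    set β := (x.2.2 0 1 + x.2.2 1 0)/2 with hβ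
    set γ := (x.2.2 0 0 - x.2.2 1 1)/2 with hγ
    have hx5 : x.1 • e1 + x.2.1 • e2 + α • p + β • a + γ • b = 0 := by
      have hc : ((x.2.2 0 1 - x.2.2 1 0)/2) • q = 0 := by
        rw [hδ0', sub_self, zero_div, zero_smul]
      linear_combination (norm := module) hx - hc
    have hφ0 : φ (x.1, x.2.1, α • I2 + β • S1 + γ • S3) = φ 0 := by
      have hdecomp : ((x.1, x.2.1, α • I2 + β • S1 + γ • S3) : ℝ × ℝ × symMat2)
          = x.1 • (1,0,0) + x.2.1 • (0,1,0) + α • (0,0,I2) + β • (0,0,S1) + γ • (0,0,S3) := by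
        refine Prod.ext (by simp) (Prod.ext (by simp) ?_)
        simp
      rw [hdecomp, map_zero]
      simp only [map_add, _root_.map_smul]
      rw [← he1, ← he2, ← hp, ← ha, ← hb]
      exact hx5
    have h0 := hinj hφ0
    rw [Prod.ext_iff, Prod.ext_iff] at h0
    obtain ⟨h1, h2, h3⟩ := h0
    have h3' : α • (1 : Matrix (Fin 2) (Fin 2) ℝ) + β • !![0,1;1,0] + γ • !![1,0;0,-1] = 0 := by
      have := congrArg (fun w : symMat2 => (w : Matrix (Fin 2) (Fin 2) ℝ)) h3
      simpa [cI, cS1, cS3] using this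
    have e00 := congrFun (congrFun h3' 0) 0
    have e01 := congrFun (congrFun h3' 0) 1
    have e11 := congrFun (congrFun h3' 1) 1
    simp [Matrix.one_apply] at e00 e01 e11
    refine Prod.ext h1 (Prod.ext h2 ?_)
    show x.2.2 = 0
    have g00 : x.2.2 0 0 = 0 := by rw [hα, hγ] at e00; linarith
    have g11 : x.2.2 1 1 = 0 := by rw [hα, hγ] at e11; linarith
    have g01 : x.2.2 0 1 = 0 := by rw [hβ] at e01; linarith [hδ0']
    have g10 : x.2.2 1 0 = 0 := hδ0' ▸ g01
    ext i j
    fin_cases i <;> fin_cases j <;> simp only [Matrix.zero_apply] <;>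
      [exact g00; exact g01; exact g10; exact g11]
  have hinjψ : Function.Injective ψ :=
    LinearMap.ker_eq_bot.mp (LinearMap.ker_eq_bot'.mpr hker)
  have ψ_apply3 : ∀ (s t : ℝ) (M : Matrix (Fin 2) (Fin 2) ℝ),
      ψ (s, t, M) = s • e1 + t • e2 + ((M 0 0 + M 1 1)/2) • p +
        ((M 0 1 + M 1 0)/2) • a + ((M 0 0 - M 1 1)/2) • b +
        ((M 0 1 - M 1 0)/2) • q := fun s t M => ψ_apply (s, t, M)
  -- range ψ = B
  have hφψ : ∀ v : ℝ × ℝ × symMat2,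
      φ v = ψ (v.1, v.2.1, (v.2.2 : Matrix (Fin 2) (Fin 2) ℝ)) := by
    intro v
    obtain ⟨s, t, w⟩ := v
    have hw : (w : Matrix (Fin 2) (Fin 2) ℝ) 1 0 = (w : Matrix (Fin 2) (Fin 2) ℝ) 0 1 := by
      have h2 : ((w : Matrix (Fin 2) (Fin 2) ℝ))ᵀ = w := w.2
      have h3 := congrFun (congrFun h2 0) 1
      simpa using h3
    have hdecomp : ((s, t, w) : ℝ × ℝ × symMat2)
        = s • (1,0,0) + t • (0,1,0)
          + ((((w : Matrix (Fin 2) (Fin 2) ℝ) 0 0 + (w : Matrix (Fin 2) (Fin 2) ℝ) 1 1)/2)) • (0,0,I2)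
          + ((((w : Matrix (Fin 2) (Fin 2) ℝ) 0 1 + (w : Matrix (Fin 2) (Fin 2) ℝ) 1 0)/2)) • (0,0,S1)
          + ((((w : Matrix (Fin 2) (Fin 2) ℝ) 0 0 - (w : Matrix (Fin 2) (Fin 2) ℝ) 1 1)/2)) • (0,0,S3) := by
      refine Prod.ext (by simp) (Prod.ext (by simp) ?_)
      apply Subtype.ext
      show (w : Matrix (Fin 2) (Fin 2) ℝ) = _
      push_cast
      ext i j
      fin_cases i <;> fin_cases j <;>
        simp [cI, cS1, cS3, Matrix.one_apply] <;> linarith [hw]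
    conv_lhs => rw [hdecomp]
    rw [show ((s, t, (w : Matrix (Fin 2) (Fin 2) ℝ)) :
      ℝ × ℝ × Matrix (Fin 2) (Fin 2) ℝ).1 = s from rfl] -- no-op guard
    rw [ψ_apply3]
    simp only [map_add, _root_.map_smul]
    rw [← he1, ← he2, ← hp, ← ha, ← hb]
    match_scalars <;> linarith [hw]
  have hJψ : J ≤ LinearMap.range ψ := by
    intro x hxJ
    rw [← hrange] at hxJ
    obtain ⟨v, rfl⟩ := hxJ
    exact ⟨(v.1, v.2.1, (v.2.2 : Matrix (Fin 2) (Fin 2) ℝ)), (hφψ v).symm⟩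
  have hψmem : LinearMap.range ψ ∈
      {A : Submodule ℝ (Matrix Ω Ω ℝ) | J ≤ A ∧ ∀ x ∈ A, ∀ y ∈ A, x * y ∈ A} := by
    refine ⟨hJψ, ?_⟩
    rintro x ⟨u, rfl⟩ y ⟨v, rfl⟩
    exact ⟨(u.1 * v.1, u.2.1 * v.2.1, u.2.2 * v.2.2), hmulψ u v⟩
  have hBle : B ≤ LinearMap.range ψ := sInf_le hψmem
  have hJB : J ≤ B := le_sInf fun A hA => hA.1
  have hBmul : ∀ x ∈ B, ∀ y ∈ B, x * y ∈ B := by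
    intro x hx y hy
    refine Submodule.mem_sInf.mpr fun A hA => ?_
    exact hA.2 x (Submodule.mem_sInf.mp hx A hA) y (Submodule.mem_sInf.mp hy A hA)
  have hmemB : ∀ v : ℝ × ℝ × symMat2, φ v ∈ B := fun v => hJB (memJ v)
  have hqB : q ∈ B := by
    rw [hq]
    exact hBmul b (hmemB (0,0,S3)) a (hmemB (0,0,S1))
  have hψB : LinearMap.range ψ ≤ B := by
    rintro x ⟨v, rfl⟩
    rw [ψ_apply]
    refine B.add_mem (B.add_mem (B.add_mem (B.add_mem (B.add_mem ?_ ?_) ?_) ?_) ?_) ?_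
    · exact B.smul_mem _ (hmemB (1,0,0))
    · exact B.smul_mem _ (hmemB (0,1,0))
    · exact B.smul_mem _ (hmemB (0,0,I2))
    · exact B.smul_mem _ (hmemB (0,0,S1))
    · exact B.smul_mem _ (hmemB (0,0,S3))
    · exact B.smul_mem _ hqB
  have hrangeB : LinearMap.range ψ = B := le_antisymm hψB hBle
  have hfin : Module.finrank ℝ B = 6 := by
    rw [← hrangeB, LinearMap.finrank_range_of_inj hinjψ]
    simp [Module.finrank_prod, Module.finrank_matrix]
  exact ⟨hfin, ψ, hinjψ, hrangeB, hmulψ⟩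





end JordanPaper

end
end

section
/- Let X = (Ω, C) with C = {C_0 = 1_Ω, C_1, C_2, C_3, C_4} be a symmetric homogeneous rainbow of rank 5 on Ω, and set C := C_2 ∪ C_3 ∪ C_4. Assume that for each i ∈ {2,3,4} the partition C_i := {C_0, C_1, C_i, C∖C_i} of Ω×Ω is an association scheme (a homogeneous coherent configuration). Then X is a Jordan scheme: for all classes C, D ∈ C the quantity |C(α)∩D^T(β)| + |D(α)∩C^T(β)| depends only on the class of C containing (α,β). -/
open Matrix

noncomputable section

namespace JordanPaper

open scoped Classical

variable {Ω : Type*}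

/-! `cnum c d α β` is the `(α, β)` entry of the product `A_c A_d` of adjacency matrices. Every
class of `X` lies in a class of the coherent fusion `{C₀, C₁, C_i, C_j ∪ C_k}`, so the product of
two of its classes has entries constant on the classes of `X`. This settles every Jordan product
except `C_i C_j + C_j C_i` for distinct `i, j ∈ {2, 3, 4}`; for those, with `k` the third index,
`C_i C_j + C_j C_i = C_i (C_j + C_k) + C_j (C_i + C_k) - (C_i + C_j) C_k`,
and the three products on the right are products within the fusions for `i`, `j` and `k`. -/

def ConstOn (f : Set (Ω × Ω)) (n : Ω → Ω → ℕ) : Prop :=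
  ∀ p ∈ f, ∀ q ∈ f, n p.1 p.2 = n q.1 q.2

section ConstOn

variable {f g : Set (Ω × Ω)} {n m : Ω → Ω → ℕ}

lemma ConstOn.mono (h : ConstOn g n) (hfg : f ⊆ g) : ConstOn f n :=
  fun p hp q hq => h p (hfg hp) q (hfg hq)

lemma ConstOn.add (hn : ConstOn f n) (hm : ConstOn f m) : ConstOn f (n + m) :=
  fun p hp q hq => congrArg₂ (· + ·) (hn p hp q hq) (hm p hp q hq)

lemma ConstOn.of_add_right (h : ConstOn f (n + m)) (hm : ConstOn f m) : ConstOn f n :=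
  fun p hp q hq => Nat.add_right_cancel ((h p hp q hq).trans (congrArg _ (hm p hp q hq).symm))

end ConstOn

lemma IsCoherentCond.constOn {P : Set (Set (Ω × Ω))} (hP : IsCoherentCond P)
    {c d f : Set (Ω × Ω)} (hc : c ∈ P) (hd : d ∈ P) (hf : ∃ g ∈ P, f ⊆ g) :
    ConstOn f (cnum c d) := by
  obtain ⟨g, hg, hfg⟩ := hf
  exact ConstOn.mono (hP c hc d hd g hg) hfg

lemma jnum_eq_add (c d : Set (Ω × Ω)) : jnum c d = cnum c d + cnum d c := rfl

lemma jnum_comm (c d : Set (Ω × Ω)) : jnum c d = jnum d c := by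
  rw [jnum_eq_add, jnum_eq_add, add_comm]

lemma constOn_jnum_of_mem {P : Set (Set (Ω × Ω))} {f c d : Set (Ω × Ω)}
    (h : ∀ c ∈ P, ∀ d ∈ P, ConstOn f (cnum c d)) (hc : c ∈ P) (hd : d ∈ P) :
    ConstOn f (jnum c d) :=
  (h c hc d hd).add (h d hd c hc)

section Finite

variable [Fintype Ω]

lemma cnum_union_right {d d' : Set (Ω × Ω)} (h : Disjoint d d') (c : Set (Ω × Ω)) (α β : Ω) :
    cnum c (d ∪ d') α β = cnum c d α β + cnum c d' α β := by
  have hdisj : Disjoint (outSet (transposeRel d) β) (outSet (transposeRel d') β) :=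
    Set.disjoint_left.mpr fun γ hγ hγ' => Set.disjoint_left.mp h hγ hγ'
  rw [cnum, show outSet (transposeRel (d ∪ d')) β
      = outSet (transposeRel d) β ∪ outSet (transposeRel d') β from rfl,
    Set.inter_union_distrib_left]
  exact Set.ncard_union_eq (hdisj.mono Set.inter_subset_right Set.inter_subset_right)

lemma cnum_union_left {c c' : Set (Ω × Ω)} (h : Disjoint c c') (d : Set (Ω × Ω)) (α β : Ω) :
    cnum (c ∪ c') d α β = cnum c d α β + cnum c' d α β := by
  have hdisj : Disjoint (outSet c α) (outSet c' α) :=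
    Set.disjoint_left.mpr fun γ hγ hγ' => Set.disjoint_left.mp h hγ hγ'
  rw [cnum, show outSet (c ∪ c') α = outSet c α ∪ outSet c' α from rfl,
    Set.union_inter_distrib_right]
  exact Set.ncard_union_eq (hdisj.mono Set.inter_subset_left Set.inter_subset_left)

section ThreeClasses

variable {A B D : Set (Ω × Ω)}

lemma jnum_add_cnum_union (hAB : Disjoint A B) (hAD : Disjoint A D) (hBD : Disjoint B D) :
    jnum A B + cnum (A ∪ B) D = cnum A (B ∪ D) + cnum B (A ∪ D) := by
  funext α β
  simp only [Pi.add_apply, jnum, cnum_union_left hAB, cnum_union_right hBD,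
    cnum_union_right hAD]
  ring

lemma constOn_jnum_of_cnum_union (hAB : Disjoint A B) (hAD : Disjoint A D)
    (hBD : Disjoint B D) {f : Set (Ω × Ω)} (hA : ConstOn f (cnum A (B ∪ D)))
    (hB : ConstOn f (cnum B (A ∪ D))) (hD : ConstOn f (cnum (A ∪ B) D)) :
    ConstOn f (jnum A B) :=
  ConstOn.of_add_right (jnum_add_cnum_union hAB hAD hBD ▸ hA.add hB) hD

end ThreeClasses

end Finite

lemma constOn_jnum_of_fusions [Fintype Ω] {C0 C1 C2 C3 C4 f : Set (Ω × Ω)}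
    (d23 : Disjoint C2 C3) (d24 : Disjoint C2 C4) (d34 : Disjoint C3 C4)
    (h2 : ∀ c ∈ ({C0, C1, C2, C3 ∪ C4} : Set (Set (Ω × Ω))),
      ∀ d ∈ ({C0, C1, C2, C3 ∪ C4} : Set (Set (Ω × Ω))), ConstOn f (cnum c d))
    (h3 : ∀ c ∈ ({C0, C1, C3, C2 ∪ C4} : Set (Set (Ω × Ω))),
      ∀ d ∈ ({C0, C1, C3, C2 ∪ C4} : Set (Set (Ω × Ω))), ConstOn f (cnum c d))
    (h4 : ∀ c ∈ ({C0, C1, C4, C2 ∪ C3} : Set (Set (Ω × Ω))),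
      ∀ d ∈ ({C0, C1, C4, C2 ∪ C3} : Set (Set (Ω × Ω))), ConstOn f (cnum c d))
    {c d : Set (Ω × Ω)} (hc : c ∈ ({C0, C1, C2, C3, C4} : Set (Set (Ω × Ω))))
    (hd : d ∈ ({C0, C1, C2, C3, C4} : Set (Set (Ω × Ω)))) :
    ConstOn f (jnum c d) := by
  have j23 : ConstOn f (jnum C2 C3) := constOn_jnum_of_cnum_union d23 d24 d34
    (h2 _ (by simp) _ (by simp)) (h3 _ (by simp) _ (by simp)) (h4 _ (by simp) _ (by simp))
  have j24 : ConstOn f (jnum C2 C4) := constOn_jnum_of_cnum_union d24 d23 d34.symm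
    (Set.union_comm C3 C4 ▸ h2 _ (by simp) _ (by simp)) (h4 _ (by simp) _ (by simp))
    (h3 _ (by simp) _ (by simp))
  have j34 : ConstOn f (jnum C3 C4) := constOn_jnum_of_cnum_union d34 d23.symm d24.symm
    (Set.union_comm C2 C4 ▸ h3 _ (by simp) _ (by simp))
    (Set.union_comm C2 C3 ▸ h4 _ (by simp) _ (by simp)) (h2 _ (by simp) _ (by simp))
  simp only [Set.mem_insert_iff, Set.mem_singleton_iff] at hc hd
  rcases hc with rfl | rfl | rfl | rfl | rfl <;> rcases hd with rfl | rfl | rfl | rfl | rfl <;>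
    first
      | (apply constOn_jnum_of_mem h2 <;> simp <;> done)
      | (apply constOn_jnum_of_mem h3 <;> simp <;> done)
      | (apply constOn_jnum_of_mem h4 <;> simp <;> done)
      | assumption
      | exact jnum_comm _ _ ▸ ‹_›

lemma exists_superset_of_mem_insert_union {C0 C1 A B D f : Set (Ω × Ω)}
    (hf : f ∈ ({C0, C1, A, B, D} : Set (Set (Ω × Ω)))) :
    ∃ g ∈ ({C0, C1, A, B ∪ D} : Set (Set (Ω × Ω))), f ⊆ g := by
  simp only [Set.mem_insert_iff, Set.mem_singleton_iff] at hf
  rcases hf with rfl | rfl | rfl | rfl | rfl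
  · exact ⟨f, by simp, subset_rfl⟩
  · exact ⟨f, by simp, subset_rfl⟩
  · exact ⟨f, by simp, subset_rfl⟩
  · exact ⟨f ∪ D, by simp, Set.subset_union_left⟩
  · exact ⟨B ∪ f, by simp, Set.subset_union_right⟩

lemma isJordanCond_of_fusions [Fintype Ω] {C0 C1 C2 C3 C4 : Set (Ω × Ω)}
    (d23 : Disjoint C2 C3) (d24 : Disjoint C2 C4) (d34 : Disjoint C3 C4)
    (h2 : IsCoherentCond {C0, C1, C2, C3 ∪ C4}) (h3 : IsCoherentCond {C0, C1, C3, C2 ∪ C4})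
    (h4 : IsCoherentCond {C0, C1, C4, C2 ∪ C3}) :
    IsJordanCond {C0, C1, C2, C3, C4} := by
  intro c hc d hd f hf
  have hf3 : f ∈ ({C0, C1, C3, C2, C4} : Set (Set (Ω × Ω))) := by
    simp only [Set.mem_insert_iff, Set.mem_singleton_iff] at hf ⊢; tauto
  have hf4 : f ∈ ({C0, C1, C4, C2, C3} : Set (Set (Ω × Ω))) := by
    simp only [Set.mem_insert_iff, Set.mem_singleton_iff] at hf ⊢; tauto
  exact constOn_jnum_of_fusions d23 d24 d34
    (fun _ hc _ hd => h2.constOn hc hd (exists_superset_of_mem_insert_union hf))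
    (fun _ hc _ hd => h3.constOn hc hd (exists_superset_of_mem_insert_union hf3))
    (fun _ hc _ hd => h4.constOn hc hd (exists_superset_of_mem_insert_union hf4)) hc hd

lemma transposeRel_diagRel_univ :
    transposeRel (diagRel (Set.univ : Set Ω)) = diagRel Set.univ := by
  ext p
  simp [transposeRel, diagRel, eq_comm]

lemma IsPartition.isRainbow {P : Set (Set (Ω × Ω))} (hP : IsPartition P)
    (hdiag : diagRel Set.univ ∈ P) (hsymm : ∀ c ∈ P, transposeRel c = c) : IsRainbow P := by
  refine ⟨hP, fun c hc hne => ?_, fun c hc => (hsymm c hc).symm ▸ hc⟩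
  by_contra hsub
  have hcd : c ≠ diagRel Set.univ := by rintro rfl; exact hsub subset_rfl
  exact hne.ne_empty (hP.2.1 c hc _ hdiag hcd)

lemma isPartition_of_pairwise_disjoint {l : List (Set (Ω × Ω))} (hdisj : l.Pairwise Disjoint)
    (hne : ∀ c ∈ l, c.Nonempty) (hcover : ∀ p, ∃ c ∈ l, p ∈ c) : IsPartition {c | c ∈ l} :=
  ⟨hne, fun c hc d hd hcd => Set.disjoint_iff_inter_eq_empty.mp (hdisj.forall hc hd hcd),
    Set.eq_univ_of_forall fun p => by simpa using hcover p⟩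

theorem statement13_general {Ω : Type*} [Fintype Ω]
    (C0 C1 C2 C3 C4 : Set (Ω × Ω))
    (hC0 : C0 = diagRel (Set.univ : Set Ω))
    (hdisj : ([C0, C1, C2, C3, C4] : List (Set (Ω × Ω))).Pairwise Disjoint)
    (hne : C0.Nonempty ∧ C1.Nonempty ∧ C2.Nonempty ∧ C3.Nonempty ∧ C4.Nonempty)
    (hcover : C0 ∪ C1 ∪ C2 ∪ C3 ∪ C4 = Set.univ)
    (hsym : transposeRel C1 = C1 ∧ transposeRel C2 = C2 ∧
      transposeRel C3 = C3 ∧ transposeRel C4 = C4)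
    (hAS2 : IsCoherentConfig {C0, C1, C2, (C2 ∪ C3 ∪ C4) \ C2})
    (hAS3 : IsCoherentConfig {C0, C1, C3, (C2 ∪ C3 ∪ C4) \ C3})
    (hAS4 : IsCoherentConfig {C0, C1, C4, (C2 ∪ C3 ∪ C4) \ C4}) :
    IsJordanConfig {C0, C1, C2, C3, C4} ∧
    diagRel (Set.univ : Set Ω) ∈ ({C0, C1, C2, C3, C4} : Set (Set (Ω × Ω))) := by
  have hdiag : diagRel (Set.univ : Set Ω) ∈ ({C0, C1, C2, C3, C4} : Set (Set (Ω × Ω))) :=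
    hC0 ▸ Set.mem_insert _ _
  have hpart : IsPartition ({C0, C1, C2, C3, C4} : Set (Set (Ω × Ω))) := by
    convert isPartition_of_pairwise_disjoint hdisj (by simpa using hne)
      (fun p => by simpa [or_assoc] using hcover.ge (Set.mem_univ p))
    ext; simp
  have hsymm : ∀ c ∈ ({C0, C1, C2, C3, C4} : Set (Set (Ω × Ω))), transposeRel c = c := by
    rintro c (rfl | rfl | rfl | rfl | rfl) <;> simp [hC0, transposeRel_diagRel_univ, hsym]
  obtain ⟨d23, d24, d34⟩ : Disjoint C2 C3 ∧ Disjoint C2 C4 ∧ Disjoint C3 C4 := by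
    simp only [List.pairwise_cons, List.mem_cons, List.not_mem_nil] at hdisj
    exact ⟨hdisj.2.2.1 C3 (by simp), hdisj.2.2.1 C4 (by simp), hdisj.2.2.2.1 C4 (by simp)⟩
  have hR2 : (C2 ∪ C3 ∪ C4) \ C2 = C3 ∪ C4 := by
    simp [Set.union_sdiff_distrib, d23.symm.sdiff_eq_left, d24.symm.sdiff_eq_left]
  have hR3 : (C2 ∪ C3 ∪ C4) \ C3 = C2 ∪ C4 := by
    simp [Set.union_sdiff_distrib, d23.sdiff_eq_left, d34.symm.sdiff_eq_left]
  have hR4 : (C2 ∪ C3 ∪ C4) \ C4 = C2 ∪ C3 := by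
    simp [Set.union_sdiff_distrib, d24.sdiff_eq_left, d34.sdiff_eq_left]
  rw [hR2] at hAS2
  rw [hR3] at hAS3
  rw [hR4] at hAS4
  exact ⟨⟨hpart.isRainbow hdiag hsymm,
    isJordanCond_of_fusions d23 d24 d34 hAS2.2 hAS3.2 hAS4.2⟩, hdiag⟩

theorem statement13 {Ω : Type*} [Fintype Ω] [Nonempty Ω]
    (C0 C1 C2 C3 C4 : Set (Ω × Ω))
    (hC0 : C0 = diagRel (Set.univ : Set Ω))
    (hdisj : ([C0, C1, C2, C3, C4] : List (Set (Ω × Ω))).Pairwise Disjoint)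
    (hne : C0.Nonempty ∧ C1.Nonempty ∧ C2.Nonempty ∧ C3.Nonempty ∧ C4.Nonempty)
    (hcover : C0 ∪ C1 ∪ C2 ∪ C3 ∪ C4 = Set.univ)
    (hsym : transposeRel C1 = C1 ∧ transposeRel C2 = C2 ∧
      transposeRel C3 = C3 ∧ transposeRel C4 = C4)
    (hAS2 : IsCoherentConfig {C0, C1, C2, (C2 ∪ C3 ∪ C4) \ C2})
    (hAS3 : IsCoherentConfig {C0, C1, C3, (C2 ∪ C3 ∪ C4) \ C3})
    (hAS4 : IsCoherentConfig {C0, C1, C4, (C2 ∪ C3 ∪ C4) \ C4}) :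
    IsJordanConfig {C0, C1, C2, C3, C4} ∧
    diagRel (Set.univ : Set Ω) ∈ ({C0, C1, C2, C3, C4} : Set (Set (Ω × Ω))) :=
  statement13_general C0 C1 C2 C3 C4 hC0 hdisj hne hcover hsym hAS2 hAS3 hAS4

end JordanPaper

end
end

section
/- Let d ≥ 1, V = (ℤ/3ℤ)^d, r = (3^d − 1)/2. Let π_1, ..., π_r : V → ℤ/3ℤ be surjective linear maps with pairwise distinct kernels (so their kernels are exactly the r hyperplanes of V through 0). Let ⋄ : {0,...,r}×{0,...,r} → {0,...,r} be a binary operation with a⋄a = 0 for all a and such that x ↦ a⋄x is a bijection of {0,...,r} for every a. For each pair 0 ≤ i < j ≤ r let σ_{ij} be a permutation of ℤ/3ℤ, and set σ_{ji} := σ_{ij}^{−1}. Let Ω := V × {0,...,r} and R := {((u,i),(v,j)) ∈ Ω×Ω : i ≠ j and σ_{ij}(π_{i⋄j}(u)) = π_{j⋄i}(v)}. Then the graph Γ = (Ω, R) is strongly regular with parameters (3^d(3^d+1)/2, 3^{d−1}(3^d−1)/2, 3^{d−1}(3^{d−1}−1)/2, 3^{d−1}(3^{d−1}−1)/2): R is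 symmetric and irreflexive with |Ω| = 3^d(3^d+1)/2, every vertex has exactly 3^{d−1}(3^d−1)/2 neighbors, and any two distinct vertices have exactly 3^{d−1}(3^{d−1}−1)/2 common neighbors regardless of whether they are adjacent. -/
open Matrix

noncomputable section

namespace JordanPaper

open scoped Classical

variable {Ω : Type*}

/-- The relation `R(⋄, τ)` of the Wallis–Fon-Der-Flaass construction:
`(u,i) ∼ (v,j)` iff `i ≠ j` and `τ_{ij}(π_{i⋄j}(u)) = π_{j⋄i}(v)`. -/
def RrelGen (d r : ℕ) (π : Fin (r + 1) → ((Fin d → ZMod 3) →ₗ[ZMod 3] ZMod 3))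
    (dia : Fin (r + 1) → Fin (r + 1) → Fin (r + 1))
    (τ : Fin (r + 1) → Fin (r + 1) → Equiv.Perm (ZMod 3)) :
    Set (((Fin d → ZMod 3) × Fin (r + 1)) × ((Fin d → ZMod 3) × Fin (r + 1))) :=
  {p | p.1.2 ≠ p.2.2 ∧ τ p.1.2 p.2.2 (π (dia p.1.2 p.2.2) p.1.1) = π (dia p.2.2 p.1.2) p.2.1}

section AuxCount

lemma cardV (d : ℕ) : Nat.card (Fin d → ZMod 3) = 3 ^ d := by
  simp [Nat.card_pi, Nat.card_zmod]

lemma card_dual (d : ℕ) : Nat.card ((Fin d → ZMod 3) →ₗ[ZMod 3] ZMod 3) = 3 ^ d := by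
  rw [Nat.card_congr (LinearEquiv.piRing (ZMod 3) (ZMod 3) (Fin d) (ZMod 3)).toEquiv]
  exact cardV d

lemma card_fiber_mul {M N : Type*} [AddCommGroup M] [Module (ZMod 3) M]
    [AddCommGroup N] [Module (ZMod 3) N] [Finite M]
    (f : M →ₗ[ZMod 3] N) (hf : Function.Surjective f) (c : N) :
    Nat.card {x : M // f x = c} * Nat.card N = Nat.card M := by
  obtain ⟨x0, hx0⟩ := hf c
  have e : {x : M // f x = c} ≃ LinearMap.ker f :=
    { toFun := fun x => ⟨x.1 - x0, by simp [LinearMap.mem_ker, map_sub, x.2, hx0]⟩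
      invFun := fun x => ⟨x.1 + x0, by
        have hx := x.2
        rw [LinearMap.mem_ker] at hx
        simp [map_add, hx, hx0]⟩
      left_inv := fun x => by ext; simp
      right_inv := fun x => by ext; simp }
  rw [Nat.card_congr e]
  have h1 := Submodule.card_eq_card_quotient_mul_card (LinearMap.ker f)
  have h2 : Nat.card (M ⧸ LinearMap.ker f) = Nat.card N :=
    Nat.card_congr (f.quotKerEquivOfSurjective hf).toEquiv
  rw [h1, h2, mul_comm]

lemma fiber_card_one {d : ℕ} (hd : 1 ≤ d) {M : Type*} [AddCommGroup M] [Module (ZMod 3) M]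
    [Finite M] (hM : Nat.card M = 3 ^ d)
    (f : M →ₗ[ZMod 3] ZMod 3) (hf : Function.Surjective f) (c : ZMod 3) :
    Nat.card {x : M // f x = c} = 3 ^ (d - 1) := by
  have h := card_fiber_mul f hf c
  rw [Nat.card_zmod, hM] at h
  have h3 : (3:ℕ) ^ d = 3 ^ (d - 1) * 3 := by
    rw [← pow_succ]
    congr 1
    omega
  exact Nat.eq_of_mul_eq_mul_right (by norm_num : 0 < 3) (by rw [h, h3])

lemma fiber_card_two {d : ℕ} (hd : 2 ≤ d)
    (f : (Fin d → ZMod 3) →ₗ[ZMod 3] (ZMod 3 × ZMod 3)) (hf : Function.Surjective f)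
    (c : ZMod 3 × ZMod 3) :
    Nat.card {x // f x = c} = 3 ^ (d - 2) := by
  have h := card_fiber_mul f hf c
  have hc : Nat.card (ZMod 3 × ZMod 3) = 9 := by
    simp [Nat.card_prod, Nat.card_zmod]
  rw [hc, cardV] at h
  have h3 : (3:ℕ) ^ d = 3 ^ (d - 2) * 9 := by
    calc (3:ℕ) ^ d = 3 ^ (d - 2 + 2) := by congr 1; omega
    _ = 3 ^ (d - 2) * 9 := by rw [pow_add]; norm_num
  exact Nat.eq_of_mul_eq_mul_right (by norm_num : 0 < 9) (by rw [h, h3])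

lemma ker_finrank {d : ℕ} (f : (Fin d → ZMod 3) →ₗ[ZMod 3] ZMod 3)
    (hf : Function.Surjective f) :
    1 + Module.finrank (ZMod 3) (LinearMap.ker f) = d := by
  have := LinearMap.finrank_range_add_finrank_ker f
  rw [LinearMap.range_eq_top.mpr hf, finrank_top, Module.finrank_self,
    Module.finrank_pi, Fintype.card_fin] at this
  exact this

lemma prod_surjective {d : ℕ} (f g : (Fin d → ZMod 3) →ₗ[ZMod 3] ZMod 3)
    (hf : Function.Surjective f) (hg : Function.Surjective g)
    (hker : LinearMap.ker f ≠ LinearMap.ker g) :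
    Function.Surjective (f.prod g) := by
  have key : ∀ (f g : (Fin d → ZMod 3) →ₗ[ZMod 3] ZMod 3), Function.Surjective f →
      Function.Surjective g → LinearMap.ker f ≠ LinearMap.ker g →
      ∃ a, f a = 0 ∧ g a ≠ 0 := by
    intro f g hf hg hker
    have hle : ¬ LinearMap.ker f ≤ LinearMap.ker g := by
      intro hle
      refine hker (Submodule.eq_of_le_of_finrank_le hle ?_)
      have h1 := ker_finrank f hf
      have h2 := ker_finrank g hg
      omega
    obtain ⟨a, ha, hag⟩ := SetLike.not_le_iff_exists.mp hle
    exact ⟨a, ha, by simpa [LinearMap.mem_ker] using hag⟩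
  obtain ⟨a, haf, hag⟩ := key f g hf hg hker
  obtain ⟨b, hbg, hbf⟩ := key g f hg hf (Ne.symm hker)
  rintro ⟨s, t⟩
  refine ⟨((f b)⁻¹ * s) • b + ((g a)⁻¹ * t) • a, ?_⟩
  have h3 : Fact (Nat.Prime 3) := ⟨by norm_num⟩
  simp only [LinearMap.prod_apply, Function.prod, map_add, _root_.map_smul, smul_eq_mul, haf, hbg,
    Prod.smul_mk, Prod.mk_add_mk, smul_zero, Prod.mk.injEq, mul_zero, add_zero, zero_add]
  constructor
  · field_simp [haf]
  · field_simp [hbg]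

lemma nat_card_sigma {ι : Type*} [Fintype ι] (f : ι → Type*) [∀ i, Finite (f i)] :
    Nat.card (Σ i, f i) = ∑ i, Nat.card (f i) := by
  letI : ∀ i, Fintype (f i) := fun i => Fintype.ofFinite _
  simp_rw [Nat.card_eq_fintype_card]
  exact Fintype.card_sigma

lemma card_prod_subtype {α β : Type*} [Finite α] [Fintype β] (P : α × β → Prop) :
    Nat.card {p : α × β // P p} = ∑ b : β, Nat.card {a : α // P (a, b)} := by
  rw [Nat.card_congr ((Equiv.subtypeEquiv (Equiv.prodComm α β)
    (fun p => by simp [Equiv.prodComm])).trans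
    (Equiv.subtypeProdEquivSigmaSubtype (fun (b : β) (a : α) => P (a, b))))]
  exact nat_card_sigma _

lemma card_subtype_eq_self {α : Type*} (a : α) : Nat.card {x : α // x = a} = 1 := by
  haveI : Unique {x : α // x = a} := ⟨⟨⟨a, rfl⟩⟩, fun b => Subtype.ext b.2⟩
  exact Nat.card_unique

lemma card_compl_eq {α : Type*} [Finite α] (a : α) :
    Nat.card {x : α // x ≠ a} + 1 = Nat.card α := by
  have h := Nat.card_congr (Equiv.sumCompl (fun x : α => x = a))
  rw [Nat.card_sum, card_subtype_eq_self] at h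
  simp only [ne_eq]
  omega

lemma sum_ite_ne {n : ℕ} (i : Fin n) (c : ℕ) :
    ∑ k : Fin n, (if k = i then 0 else c) = (n - 1) * c := by
  rw [← Finset.sum_erase_add _ _ (Finset.mem_univ i), if_pos rfl, add_zero,
    Finset.sum_congr rfl (fun k hk => if_neg (Finset.ne_of_mem_erase hk)),
    Finset.sum_const, Finset.card_erase_of_mem (Finset.mem_univ i), Finset.card_univ,
    Fintype.card_fin, smul_eq_mul]

lemma sum_ite_ne2 {n : ℕ} (i j : Fin n) (hij : i ≠ j) (c : ℕ) :
    ∑ k : Fin n, (if k = i ∨ k = j then 0 else c) = (n - 2) * c := by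
  have hjmem : j ∈ Finset.univ.erase i := Finset.mem_erase.mpr ⟨hij.symm, Finset.mem_univ j⟩
  rw [← Finset.sum_erase_add _ _ (Finset.mem_univ i), if_pos (Or.inl rfl), add_zero,
    ← Finset.sum_erase_add _ _ hjmem, if_pos (Or.inr rfl), add_zero]
  have hcong : ∀ k ∈ (Finset.univ.erase i).erase j,
      (if k = i ∨ k = j then 0 else c) = c := by
    intro k hk
    rw [Finset.mem_erase] at hk
    exact if_neg (by push_neg; exact ⟨Finset.ne_of_mem_erase hk.2, hk.1⟩)
  rw [Finset.sum_congr rfl hcong, Finset.sum_const, smul_eq_mul,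
    Finset.card_erase_of_mem hjmem, Finset.card_erase_of_mem (Finset.mem_univ i),
    Finset.card_univ, Fintype.card_fin]
  have h2 : n - 1 - 1 = n - 2 := by omega
  rw [h2]

lemma sum_ite_count {n : ℕ} (Q : Fin n → Prop) [DecidablePred Q] (c : ℕ) :
    ∑ k : Fin n, (if Q k then c else 0) = Nat.card {k // Q k} * c := by
  rw [Finset.sum_ite, Finset.sum_const, Finset.sum_const_zero, add_zero, smul_eq_mul]
  congr 1
  rw [Nat.card_eq_fintype_card, Fintype.card_subtype]

def evalAt {d : ℕ} (w : Fin d → ZMod 3) :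
    ((Fin d → ZMod 3) →ₗ[ZMod 3] ZMod 3) →ₗ[ZMod 3] ZMod 3 :=
  ⟨⟨fun f => f w, fun f g => rfl⟩, fun c f => rfl⟩

@[simp] lemma evalAt_apply {d : ℕ} (w : Fin d → ZMod 3)
    (f : (Fin d → ZMod 3) →ₗ[ZMod 3] ZMod 3) : evalAt w f = f w := rfl

lemma hyperplane_count {d r : ℕ} (hd : 1 ≤ d) (h2r : 2 * r + 1 = 3 ^ d)
    (π : Fin (r + 1) → ((Fin d → ZMod 3) →ₗ[ZMod 3] ZMod 3))
    (hπsurj : ∀ i : Fin (r + 1), i ≠ 0 → Function.Surjective (π i))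
    (hπker : ∀ i j : Fin (r + 1), i ≠ 0 → j ≠ 0 → i ≠ j →
      LinearMap.ker (π i) ≠ LinearMap.ker (π j))
    (w : Fin d → ZMod 3) (hw : w ≠ 0) :
    Nat.card {m : Fin (r + 1) // m ≠ 0 ∧ π m w = 0} * 2 + 1 = 3 ^ (d - 1) := by
  haveI : Fact (Nat.Prime 3) := ⟨by norm_num⟩
  haveI hDfin : Finite ((Fin d → ZMod 3) →ₗ[ZMod 3] ZMod 3) :=
    Finite.of_equiv _ (LinearEquiv.piRing (ZMod 3) (ZMod 3) (Fin d) (ZMod 3)).toEquiv.symm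
  have hevsurj : Function.Surjective (evalAt w) := by
    obtain ⟨t, ht⟩ : ∃ t, w t ≠ 0 := by
      by_contra h
      push_neg at h
      exact hw (funext h)
    intro c
    refine ⟨c • ((w t)⁻¹ • LinearMap.proj t), ?_⟩
    rw [evalAt_apply, LinearMap.smul_apply, LinearMap.smul_apply, LinearMap.proj_apply,
      smul_eq_mul, smul_eq_mul, inv_mul_cancel₀ ht, mul_one]
  have hfib : Nat.card {f : (Fin d → ZMod 3) →ₗ[ZMod 3] ZMod 3 // f w = 0} = 3 ^ (d - 1) :=
    fiber_card_one hd (card_dual d) (evalAt w) hevsurj 0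
  have hsplit : Nat.card {f : (Fin d → ZMod 3) →ₗ[ZMod 3] ZMod 3 // f w = 0 ∧ f ≠ 0} + 1
      = 3 ^ (d - 1) := by
    have h := Nat.card_congr (Equiv.sumCompl
      (fun g : {f : (Fin d → ZMod 3) →ₗ[ZMod 3] ZMod 3 // f w = 0} => g.1 = 0))
    rw [Nat.card_sum] at h
    have e1 : Nat.card {g : {f : (Fin d → ZMod 3) →ₗ[ZMod 3] ZMod 3 // f w = 0} // g.1 = 0}
        = 1 := by
      rw [Nat.card_congr ((Equiv.subtypeSubtypeEquivSubtypeInter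
        (fun f : (Fin d → ZMod 3) →ₗ[ZMod 3] ZMod 3 => f w = 0) (fun f => f = 0)).trans
        (Equiv.subtypeEquivRight (fun f => ⟨fun h' => h'.2, fun h' => ⟨by simp [h'], h'⟩⟩)))]
      exact card_subtype_eq_self 0
    have e2 : Nat.card {g : {f : (Fin d → ZMod 3) →ₗ[ZMod 3] ZMod 3 // f w = 0} // ¬ g.1 = 0}
        = Nat.card {f : (Fin d → ZMod 3) →ₗ[ZMod 3] ZMod 3 // f w = 0 ∧ f ≠ 0} :=
      Nat.card_congr (Equiv.subtypeSubtypeEquivSubtypeInter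
        (fun f : (Fin d → ZMod 3) →ₗ[ZMod 3] ZMod 3 => f w = 0) (fun f => f ≠ 0))
    rw [e1, e2, hfib] at h
    omega
  have hinj0 : ∀ (m : Fin (r + 1)) (c : ZMod 3), m ≠ 0 → c ≠ 0 → c • π m ≠ 0 := by
    intro m c hm hc h0
    obtain ⟨x, hx⟩ := hπsurj m hm 1
    have h1 := LinearMap.congr_fun h0 x
    rw [LinearMap.smul_apply, hx, LinearMap.zero_apply, smul_eq_mul, mul_one] at h1
    exact hc h1
  have hinj : ∀ (m m' : Fin (r + 1)) (c c' : ZMod 3), m ≠ 0 → m' ≠ 0 → c ≠ 0 → c' ≠ 0 →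
      c • π m = c' • π m' → m = m' ∧ c = c' := by
    intro m m' c c' hm hm' hc hc' heq
    have hmm : m = m' := by
      by_contra hne
      apply hπker m m' hm hm' hne
      rw [← LinearMap.ker_smul (π m) c hc, heq, LinearMap.ker_smul (π m') c' hc']
    subst hmm
    refine ⟨rfl, ?_⟩
    obtain ⟨x, hx⟩ := hπsurj m hm 1
    have h1 := LinearMap.congr_fun heq x
    simp only [LinearMap.smul_apply, hx, smul_eq_mul, mul_one] at h1
    exact h1
  let Ψ : {m : Fin (r + 1) // m ≠ 0} × {c : ZMod 3 // c ≠ 0} →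
      {f : (Fin d → ZMod 3) →ₗ[ZMod 3] ZMod 3 // f ≠ 0} :=
    fun p => ⟨p.2.1 • π p.1.1, hinj0 _ _ p.1.2 p.2.2⟩
  have hΨinj : Function.Injective Ψ := by
    rintro ⟨⟨m, hm⟩, ⟨c, hc⟩⟩ ⟨⟨m', hm'⟩, ⟨c', hc'⟩⟩ h
    have h' : c • π m = c' • π m' := congrArg Subtype.val h
    obtain ⟨h1, h2⟩ := hinj m m' c c' hm hm' hc hc' h'
    subst h1; subst h2; rfl
  have hcard2 : Nat.card {c : ZMod 3 // c ≠ 0} = 2 := by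
    have h := card_compl_eq (0 : ZMod 3)
    rw [Nat.card_zmod] at h
    omega
  have hcardm : Nat.card {m : Fin (r + 1) // m ≠ 0} = r := by
    have h := card_compl_eq (0 : Fin (r + 1))
    have hfin : Nat.card (Fin (r + 1)) = r + 1 := by simp
    rw [hfin] at h
    omega
  have hcardf : Nat.card {f : (Fin d → ZMod 3) →ₗ[ZMod 3] ZMod 3 // f ≠ 0} + 1 = 3 ^ d := by
    have h := card_compl_eq (0 : (Fin d → ZMod 3) →ₗ[ZMod 3] ZMod 3)
    rw [card_dual] at h
    omega
  have hΨbij : Function.Bijective Ψ := by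
    rw [Nat.bijective_iff_injective_and_card]
    refine ⟨hΨinj, ?_⟩
    rw [Nat.card_prod, hcard2, hcardm]
    omega
  let Φ : {m : Fin (r + 1) // m ≠ 0 ∧ π m w = 0} × {c : ZMod 3 // c ≠ 0} →
      {f : (Fin d → ZMod 3) →ₗ[ZMod 3] ZMod 3 // f w = 0 ∧ f ≠ 0} :=
    fun p => ⟨p.2.1 • π p.1.1,
      by rw [LinearMap.smul_apply, p.1.2.2, smul_zero],
      hinj0 _ _ p.1.2.1 p.2.2⟩
  have hΦbij : Function.Bijective Φ := by
    constructor
    · rintro ⟨⟨m, hm⟩, ⟨c, hc⟩⟩ ⟨⟨m', hm'⟩, ⟨c', hc'⟩⟩ h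
      have h' : c • π m = c' • π m' := congrArg Subtype.val h
      obtain ⟨h1, h2⟩ := hinj m m' c c' hm.1 hm'.1 hc hc' h'
      subst h1; subst h2; rfl
    · rintro ⟨f, hfw, hf0⟩
      obtain ⟨⟨⟨m, hm⟩, ⟨c, hc⟩⟩, hmc⟩ := hΨbij.2 ⟨f, hf0⟩
      have h' : c • π m = f := congrArg Subtype.val hmc
      have hπw : π m w = 0 := by
        have h1 : (c • π m) w = 0 := by rw [h']; exact hfw
        rw [LinearMap.smul_apply, smul_eq_mul] at h1
        exact (mul_eq_zero.mp h1).resolve_left hc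
      exact ⟨⟨⟨m, hm, hπw⟩, ⟨c, hc⟩⟩, Subtype.ext h'⟩
  have hcount := Nat.card_congr (Equiv.ofBijective Φ hΦbij)
  rw [Nat.card_prod, hcard2] at hcount
  omega

end AuxCount

theorem statement14 (d : ℕ) (hd : 1 ≤ d) (r : ℕ) (hr : r = (3 ^ d - 1) / 2)
    (π : Fin (r + 1) → ((Fin d → ZMod 3) →ₗ[ZMod 3] ZMod 3))
    (hπsurj : ∀ i : Fin (r + 1), i ≠ 0 → Function.Surjective (π i))
    (hπker : ∀ i j : Fin (r + 1), i ≠ 0 → j ≠ 0 → i ≠ j →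
      LinearMap.ker (π i) ≠ LinearMap.ker (π j))
    (dia : Fin (r + 1) → Fin (r + 1) → Fin (r + 1))
    (hdia0 : ∀ a, dia a a = 0)
    (hdiabij : ∀ a, Function.Bijective (dia a))
    (σ : Fin (r + 1) → Fin (r + 1) → Equiv.Perm (ZMod 3))
    (hσ : ∀ i j : Fin (r + 1), i < j → σ j i = (σ i j)⁻¹) :
    let R := RrelGen d r π dia σ
    (∀ p, p ∈ R → (p.2, p.1) ∈ R) ∧
    (∀ v : (Fin d → ZMod 3) × Fin (r + 1), (v, v) ∉ R) ∧
    Nat.card ((Fin d → ZMod 3) × Fin (r + 1)) * 2 = 3 ^ d * (3 ^ d + 1) ∧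
    (∀ v : (Fin d → ZMod 3) × Fin (r + 1),
      ({w | (v, w) ∈ R}).ncard * 2 = 3 ^ (d - 1) * (3 ^ d - 1)) ∧
    (∀ u v : (Fin d → ZMod 3) × Fin (r + 1), u ≠ v →
      ({w | (u, w) ∈ R ∧ (v, w) ∈ R}).ncard * 2 = 3 ^ (d - 1) * (3 ^ (d - 1) - 1)) := by
  intro R
  haveI : Fact (Nat.Prime 3) := ⟨by norm_num⟩
  obtain ⟨kk, hkk⟩ : Odd ((3:ℕ) ^ d) := Odd.pow (by decide)
  have h2r : 2 * r + 1 = 3 ^ d := by omega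
  have hdia_ne : ∀ a b : Fin (r + 1), a ≠ b → dia a b ≠ 0 := by
    intro a b hab h0
    exact hab (((hdiabij a).1 (h0.trans (hdia0 a).symm)).symm)
  have hsurj' : ∀ a b : Fin (r + 1), a ≠ b → Function.Surjective (π (dia a b)) :=
    fun a b h => hπsurj _ (hdia_ne a b h)
  refine ⟨?_, ?_, ?_, ?_, ?_⟩
  · -- symmetry
    rintro ⟨⟨u, i⟩, ⟨v, j⟩⟩ hp
    obtain ⟨hne, heq⟩ := hp
    refine ⟨Ne.symm hne, ?_⟩
    rcases lt_or_gt_of_ne hne with hij | hij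
    · show σ j i (π (dia j i) v) = π (dia i j) u
      rw [hσ i j hij, ← heq]
      exact Equiv.symm_apply_apply _ _
    · show σ j i (π (dia j i) v) = π (dia i j) u
      rw [hσ j i hij] at heq
      rw [← heq]
      exact Equiv.apply_symm_apply _ _
  · -- irreflexive
    rintro ⟨v, i⟩ hp
    exact hp.1 rfl
  · -- number of vertices
    rw [Nat.card_prod, cardV, Nat.card_eq_fintype_card, Fintype.card_fin, ← h2r]
    ring
  · -- degree
    rintro ⟨u, i⟩
    rw [← Nat.card_coe_set_eq, Set.coe_setOf, card_prod_subtype]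
    have hterm : ∀ k : Fin (r + 1),
        Nat.card {x : Fin d → ZMod 3 // ((u, i), (x, k)) ∈ R} =
          if k = i then 0 else 3 ^ (d - 1) := by
      intro k
      by_cases hk : k = i
      · subst hk
        rw [if_pos rfl]
        haveI : IsEmpty {x : Fin d → ZMod 3 // ((u, k), (x, k)) ∈ R} :=
          ⟨fun x => x.2.1 rfl⟩
        exact Nat.card_of_isEmpty
      · rw [if_neg hk]
        have e : {x : Fin d → ZMod 3 // ((u, i), (x, k)) ∈ R} ≃
            {x : Fin d → ZMod 3 // π (dia k i) x = σ i k (π (dia i k) u)} :=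
          Equiv.subtypeEquivRight (fun x =>
            ⟨fun h => h.2.symm, fun h => ⟨Ne.symm hk, h.symm⟩⟩)
        rw [Nat.card_congr e]
        exact fiber_card_one hd (cardV d) _ (hsurj' k i hk) _
    rw [Finset.sum_congr rfl (fun k _ => hterm k), sum_ite_ne, Nat.add_sub_cancel]
    have h1 : 3 ^ d - 1 = 2 * r := by omega
    rw [h1]
    ring
  · -- common neighbours
    rintro ⟨u, i⟩ ⟨v, j⟩ huv
    rw [← Nat.card_coe_set_eq, Set.coe_setOf, card_prod_subtype]
    by_cases hij : i = j
    · subst hij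
      have hne : u ≠ v := fun h => huv (by rw [h])
      have hw : u - v ≠ 0 := sub_ne_zero.mpr hne
      have hterm : ∀ k : Fin (r + 1),
          Nat.card {x : Fin d → ZMod 3 //
            ((u, i), (x, k)) ∈ R ∧ ((v, i), (x, k)) ∈ R} =
            if k ≠ i ∧ π (dia i k) (u - v) = 0 then 3 ^ (d - 1) else 0 := by
        intro k
        by_cases hk : k = i
        · subst hk
          rw [if_neg (by tauto)]
          haveI : IsEmpty {x : Fin d → ZMod 3 //
              ((u, k), (x, k)) ∈ R ∧ ((v, k), (x, k)) ∈ R} :=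
            ⟨fun x => x.2.1.1 rfl⟩
          exact Nat.card_of_isEmpty
        · by_cases hz : π (dia i k) (u - v) = 0
          · rw [if_pos ⟨hk, hz⟩]
            have hzz : π (dia i k) u = π (dia i k) v := by
              rw [map_sub, sub_eq_zero] at hz
              exact hz
            have e : {x : Fin d → ZMod 3 //
                ((u, i), (x, k)) ∈ R ∧ ((v, i), (x, k)) ∈ R} ≃
                {x : Fin d → ZMod 3 // π (dia k i) x = σ i k (π (dia i k) u)} :=
              Equiv.subtypeEquivRight (fun x =>
                ⟨fun h => h.1.2.symm,
                 fun h => ⟨⟨Ne.symm hk, h.symm⟩, ⟨Ne.symm hk, by rw [← hzz]; exact h.symm⟩⟩⟩)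
            rw [Nat.card_congr e]
            exact fiber_card_one hd (cardV d) _ (hsurj' k i hk) _
          · rw [if_neg (by tauto)]
            haveI : IsEmpty {x : Fin d → ZMod 3 //
                ((u, i), (x, k)) ∈ R ∧ ((v, i), (x, k)) ∈ R} := by
              refine ⟨fun x => hz ?_⟩
              have h1 : σ i k (π (dia i k) u) = π (dia k i) x.1 := x.2.1.2
              have h2 : σ i k (π (dia i k) v) = π (dia k i) x.1 := x.2.2.2
              have h3 : π (dia i k) u = π (dia i k) v :=
                (σ i k).injective (h1.trans h2.symm)
              rw [map_sub, sub_eq_zero]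
              exact h3
            exact Nat.card_of_isEmpty
      rw [Finset.sum_congr rfl (fun k _ => hterm k), sum_ite_count]
      have hcnt : Nat.card {k : Fin (r + 1) // k ≠ i ∧ π (dia i k) (u - v) = 0} * 2 + 1 =
          3 ^ (d - 1) := by
        have e : {k : Fin (r + 1) // k ≠ i ∧ π (dia i k) (u - v) = 0} ≃
            {m : Fin (r + 1) // m ≠ 0 ∧ π m (u - v) = 0} :=
          Equiv.subtypeEquiv (Equiv.ofBijective (dia i) (hdiabij i))
            (fun k => by
              constructor
              · rintro ⟨hk1, hk2⟩
                exact ⟨hdia_ne i k (Ne.symm hk1), hk2⟩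
              · rintro ⟨hk1, hk2⟩
                refine ⟨fun h => hk1 ?_, hk2⟩
                rw [h]
                exact hdia0 i)
        rw [Nat.card_congr e]
        exact hyperplane_count hd h2r π hπsurj hπker (u - v) hw
      have h1 : 3 ^ (d - 1) - 1 =
          Nat.card {k : Fin (r + 1) // k ≠ i ∧ π (dia i k) (u - v) = 0} * 2 := by omega
      rw [h1]
      ring
    · by_cases hd2 : 2 ≤ d
      · have hterm : ∀ k : Fin (r + 1),
            Nat.card {x : Fin d → ZMod 3 //
              ((u, i), (x, k)) ∈ R ∧ ((v, j), (x, k)) ∈ R} =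
              if k = i ∨ k = j then 0 else 3 ^ (d - 2) := by
          intro k
          by_cases hk : k = i ∨ k = j
          · rw [if_pos hk]
            haveI : IsEmpty {x : Fin d → ZMod 3 //
                ((u, i), (x, k)) ∈ R ∧ ((v, j), (x, k)) ∈ R} := by
              refine ⟨fun x => ?_⟩
              rcases hk with hk | hk
              · exact x.2.1.1 hk.symm
              · exact x.2.2.1 hk.symm
            exact Nat.card_of_isEmpty
          · push_neg at hk
            obtain ⟨hki, hkj⟩ := hk
            rw [if_neg (by tauto)]
            have hker : LinearMap.ker (π (dia k i)) ≠ LinearMap.ker (π (dia k j)) :=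
              hπker _ _ (hdia_ne k i hki) (hdia_ne k j hkj)
                (fun h => hij ((hdiabij k).1 h))
            have hsurjp := prod_surjective (π (dia k i)) (π (dia k j))
              (hsurj' k i hki) (hsurj' k j hkj) hker
            have e : {x : Fin d → ZMod 3 //
                ((u, i), (x, k)) ∈ R ∧ ((v, j), (x, k)) ∈ R} ≃
                {x : Fin d → ZMod 3 // (π (dia k i)).prod (π (dia k j)) x =
                  (σ i k (π (dia i k) u), σ j k (π (dia j k) v))} :=
              Equiv.subtypeEquivRight (fun x => by
                constructor
                · rintro ⟨⟨-, h1⟩, ⟨-, h2⟩⟩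
                  exact Prod.ext h1.symm h2.symm
                · intro h
                  have h1 := congrArg Prod.fst h
                  have h2 := congrArg Prod.snd h
                  exact ⟨⟨Ne.symm hki, h1.symm⟩, ⟨Ne.symm hkj, h2.symm⟩⟩)
            rw [Nat.card_congr e]
            exact fiber_card_two hd2 _ hsurjp _
        rw [Finset.sum_congr rfl (fun k _ => hterm k), sum_ite_ne2 i j hij]
        have hm1 : 1 ≤ (3:ℕ) ^ (d - 2) := Nat.one_le_pow _ _ (by norm_num)
        have e1 : (3:ℕ) ^ (d - 1) = 3 * 3 ^ (d - 2) := by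
          calc (3:ℕ) ^ (d - 1) = 3 ^ (d - 2 + 1) := by congr 1; omega
          _ = 3 * 3 ^ (d - 2) := by rw [pow_succ]; ring
        have e2 : (3:ℕ) ^ d = 9 * 3 ^ (d - 2) := by
          calc (3:ℕ) ^ d = 3 ^ (d - 2 + 2) := by congr 1; omega
          _ = 9 * 3 ^ (d - 2) := by rw [pow_add]; ring
        set m := (3:ℕ) ^ (d - 2) with hm
        apply Nat.eq_of_mul_eq_mul_left (show 0 < 3 by norm_num)
        have h3 : 3 * ((r + 1 - 2) * m * 2) = (2 * r - 2) * (3 * m) := by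
          have h5 : 2 * (r + 1 - 2) = 2 * r - 2 := by omega
          calc 3 * ((r + 1 - 2) * m * 2) = (2 * (r + 1 - 2)) * (3 * m) := by ring
          _ = (2 * r - 2) * (3 * m) := by rw [h5]
        rw [h3, e1]
        set q := 3 * m - 1 with hq
        have h4 : 2 * r - 2 = 3 * q := by omega
        rw [h4]
        ring
      · have hd1 : (3:ℕ) ^ d = 3 := by
          have : d = 1 := by omega
          rw [this]
          norm_num
        have hr1 : r = 1 := by omega
        have hterm : ∀ k : Fin (r + 1),
            Nat.card {x : Fin d → ZMod 3 //
              ((u, i), (x, k)) ∈ R ∧ ((v, j), (x, k)) ∈ R} = 0 := by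
          intro k
          haveI : IsEmpty {x : Fin d → ZMod 3 //
              ((u, i), (x, k)) ∈ R ∧ ((v, j), (x, k)) ∈ R} := by
            refine ⟨fun x => ?_⟩
            have h1 : i ≠ k := x.2.1.1
            have h2 : j ≠ k := x.2.2.1
            have hi := i.isLt
            have hj := j.isLt
            have hkk := k.isLt
            have e1 : (i : ℕ) ≠ (j : ℕ) := fun h => hij (Fin.val_injective h)
            have e2 : (i : ℕ) ≠ (k : ℕ) := fun h => h1 (Fin.val_injective h)
            have e3 : (j : ℕ) ≠ (k : ℕ) := fun h => h2 (Fin.val_injective h)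
            omega
          exact Nat.card_of_isEmpty
        rw [Finset.sum_congr rfl (fun k _ => hterm k), Finset.sum_const_zero]
        have h0 : d - 1 = 0 := by omega
        rw [h0]
        norm_num


end JordanPaper

end
end
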